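/- arXiv:math/0201224 — 2 statements merged into one kernel-verified Lean document; each statement's English description precedes it below -/
import Mathlib

section
/- For any two smooth contravariant metrics g_1, g_2 on U, with N^k_{ij} the Nijenhuis tensor of the affinor v^i_j = g_1^{is} g_{2,sj}, the following identities hold identically on U (summation over repeated indices): (1) g_{1,sp} N^p_{rq} g_2^{ri} g_2^{qj} g_2^{sk} = M^{kji} + M^{ikj} + M^{ijk}; (2) 2(M^{ikj} + M^{ijk}) = g_{1,sp} N^p_{rq} g_2^{ri} g_2^{qj} g_2^{sk} + g_{1,sp} N^p_{rq} g_2^{ri} g_2^{qk} g_2^{sj}; (3) 2 M^{kji} = g_{1,sp} N^p_{rq} g_2^{ri} g_2^{qj} g_2^{sk} − g_{1,sp} N^p_{rq} g_2^{ri} g_2^{qk} g_2^{sj}. -/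
open scoped BigOperators

/-- Partial derivative of a scalar function on `ℝ^N` in the `j`-th coordinate direction. -/
noncomputable def pd {N : ℕ} (f : (Fin N → ℝ) → ℝ) (j : Fin N) (u : Fin N → ℝ) : ℝ :=
  fderiv ℝ f u (Pi.single j 1)

/-- Christoffel symbols `Γ^i_{jk}` of a contravariant metric `g` (with lower metric `g⁻¹`). -/
noncomputable def christoffelLow {N : ℕ} (g : (Fin N → ℝ) → Matrix (Fin N) (Fin N) ℝ)
    (i j k : Fin N) (u : Fin N → ℝ) : ℝ :=
  (1 / 2) * ∑ s, g u i s *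
    (pd (fun v => (g v)⁻¹ s k) j u + pd (fun v => (g v)⁻¹ j s) k u
      - pd (fun v => (g v)⁻¹ j k) s u)

/-- Christoffel symbols with raised index `Γ^{ij}_k = g^{is} Γ^j_{sk}`. -/
noncomputable def christoffelUp {N : ℕ} (g : (Fin N → ℝ) → Matrix (Fin N) (Fin N) ℝ)
    (i j k : Fin N) (u : Fin N → ℝ) : ℝ :=
  ∑ s, g u i s * christoffelLow g j s k u

/-- Riemann curvature tensor `R^i_{jkl}`. -/
noncomputable def riemannLow {N : ℕ} (g : (Fin N → ℝ) → Matrix (Fin N) (Fin N) ℝ)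
    (i j k l : Fin N) (u : Fin N → ℝ) : ℝ :=
  pd (christoffelLow g i j l) k u - pd (christoffelLow g i j k) l u
    + ∑ p, christoffelLow g i p k u * christoffelLow g p j l u
    - ∑ p, christoffelLow g i p l u * christoffelLow g p j k u

/-- Riemann curvature tensor with raised index `R^{ij}_{kl} = g^{is} R^j_{skl}`. -/
noncomputable def riemannUp {N : ℕ} (g : (Fin N → ℝ) → Matrix (Fin N) (Fin N) ℝ)
    (i j k l : Fin N) (u : Fin N → ℝ) : ℝ :=
  ∑ s, g u i s * riemannLow g j s k l u

/-- A smooth contravariant metric on `U`: smooth, symmetric and invertible at every point. -/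
def IsMetricOn {N : ℕ} (U : Set (Fin N → ℝ))
    (g : (Fin N → ℝ) → Matrix (Fin N) (Fin N) ℝ) : Prop :=
  (∀ i j, ContDiffOn ℝ (⊤ : ℕ∞) (fun u => g u i j) U) ∧
  (∀ u ∈ U, (g u).IsSymm) ∧ (∀ u ∈ U, IsUnit (g u).det)

/-- Almost compatibility of two contravariant metrics on `U`. -/
def AlmostCompatibleOn {N : ℕ} (U : Set (Fin N → ℝ))
    (g₁ g₂ : (Fin N → ℝ) → Matrix (Fin N) (Fin N) ℝ) : Prop :=
  ∀ l₁ l₂ : ℝ, (∀ u ∈ U, IsUnit (l₁ • g₁ u + l₂ • g₂ u).det) →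
    ∀ u ∈ U, ∀ i j k, christoffelUp (fun v => l₁ • g₁ v + l₂ • g₂ v) i j k u =
      l₁ * christoffelUp g₁ i j k u + l₂ * christoffelUp g₂ i j k u

/-- Compatibility of two contravariant metrics on `U`. -/
def CompatibleOn {N : ℕ} (U : Set (Fin N → ℝ))
    (g₁ g₂ : (Fin N → ℝ) → Matrix (Fin N) (Fin N) ℝ) : Prop :=
  ∀ l₁ l₂ : ℝ, (∀ u ∈ U, IsUnit (l₁ • g₁ u + l₂ • g₂ u).det) →
    ∀ u ∈ U,
      (∀ i j k, christoffelUp (fun v => l₁ • g₁ v + l₂ • g₂ v) i j k u =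
        l₁ * christoffelUp g₁ i j k u + l₂ * christoffelUp g₂ i j k u) ∧
      (∀ i j k l, riemannUp (fun v => l₁ • g₁ v + l₂ • g₂ v) i j k l u =
        l₁ * riemannUp g₁ i j k l u + l₂ * riemannUp g₂ i j k l u)

/-- Nijenhuis tensor `N^k_{ij}` of an affinor `v^i_j(u)`. -/
noncomputable def nijenhuis {N : ℕ} (v : (Fin N → ℝ) → Matrix (Fin N) (Fin N) ℝ)
    (k i j : Fin N) (u : Fin N → ℝ) : ℝ :=
  ∑ s, (v u s i * pd (fun w => v w k j) s u - v u s j * pd (fun w => v w k i) s u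
    + v u k s * pd (fun w => v w s i) j u - v u k s * pd (fun w => v w s j) i u)

/-- The affinor `v^i_j = g₁^{is} g_{2,sj}` of a pair of contravariant metrics. -/
noncomputable def affinor {N : ℕ} (g₁ g₂ : (Fin N → ℝ) → Matrix (Fin N) (Fin N) ℝ)
    (u : Fin N → ℝ) : Matrix (Fin N) (Fin N) ℝ :=
  g₁ u * (g₂ u)⁻¹

/-- A nonsingular pair of metrics: at every point the roots of
`det(g₁ - λ g₂) = 0` are real and pairwise distinct. -/
def NonsingularPairOn {N : ℕ} (U : Set (Fin N → ℝ))
    (g₁ g₂ : (Fin N → ℝ) → Matrix (Fin N) (Fin N) ℝ) : Prop :=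
  ∀ u ∈ U, ∃ ev : Fin N → ℝ, Function.Injective ev ∧
    ∀ i, (g₁ u - ev i • g₂ u).det = 0

/-- Flatness of a contravariant metric on `U`. -/
def IsFlatOn {N : ℕ} (U : Set (Fin N → ℝ))
    (g : (Fin N → ℝ) → Matrix (Fin N) (Fin N) ℝ) : Prop :=
  ∀ u ∈ U, ∀ i j k l, riemannLow g i j k l u = 0

/-- Constant Riemannian curvature `K` on `U`. -/
def HasConstCurvatureOn {N : ℕ} (U : Set (Fin N → ℝ))
    (g : (Fin N → ℝ) → Matrix (Fin N) (Fin N) ℝ) (K : ℝ) : Prop :=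
  ∀ u ∈ U, ∀ i j k l, riemannUp g i j k l u =
    K * ((if i = l then (1 : ℝ) else 0) * (if j = k then (1 : ℝ) else 0)
      - (if i = k then (1 : ℝ) else 0) * (if j = l then (1 : ℝ) else 0))

/-- The tensor `M^{ijk}` of a pair of contravariant metrics. -/
noncomputable def MTensor {N : ℕ} (g₁ g₂ : (Fin N → ℝ) → Matrix (Fin N) (Fin N) ℝ)
    (i j k : Fin N) (u : Fin N → ℝ) : ℝ :=
  ∑ s, (g₁ u i s * christoffelUp g₂ j k s u - g₂ u j s * christoffelUp g₁ i k s u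
    - g₁ u j s * christoffelUp g₂ i k s u + g₂ u i s * christoffelUp g₁ j k s u)

namespace NijenhuisAux

open Finset

variable {n : ℕ}

/-! ### Sum reordering helpers -/

lemma sum3_perm_231 (f : Fin n → Fin n → Fin n → ℝ) :
    (∑ x, ∑ y, ∑ z, f x y z) = ∑ y, ∑ z, ∑ x, f x y z :=
  (Finset.sum_comm).trans (Finset.sum_congr rfl fun _ _ => Finset.sum_comm)

lemma sum3_perm_312 (f : Fin n → Fin n → Fin n → ℝ) :
    (∑ x, ∑ y, ∑ z, f x y z) = ∑ z, ∑ x, ∑ y, f x y z :=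
  (sum3_perm_231 fun z x y => f x y z).symm

lemma sum3_perm_321 (f : Fin n → Fin n → Fin n → ℝ) :
    (∑ x, ∑ y, ∑ z, f x y z) = ∑ z, ∑ y, ∑ x, f x y z :=
  (sum3_perm_312 f).trans (Finset.sum_congr rfl fun _ _ => Finset.sum_comm)

lemma sum4_perm_a (f : Fin n → Fin n → Fin n → Fin n → ℝ) :
    (∑ s, ∑ r, ∑ q, ∑ m, f s r q m) = ∑ m, ∑ s, ∑ q, ∑ r, f s r q m :=
  calc (∑ s, ∑ r, ∑ q, ∑ m, f s r q m)
      = ∑ s, ∑ m, ∑ r, ∑ q, f s r q m :=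
        Finset.sum_congr rfl fun s _ => sum3_perm_312 (fun r q m => f s r q m)
    _ = ∑ m, ∑ s, ∑ r, ∑ q, f s r q m := Finset.sum_comm
    _ = ∑ m, ∑ s, ∑ q, ∑ r, f s r q m :=
        Finset.sum_congr rfl fun _ _ => Finset.sum_congr rfl fun _ _ => Finset.sum_comm

lemma sum4_perm_c (f : Fin n → Fin n → Fin n → Fin n → ℝ) :
    (∑ s, ∑ r, ∑ q, ∑ m, f s r q m) = ∑ q, ∑ r, ∑ m, ∑ s, f s r q m :=
  calc (∑ s, ∑ r, ∑ q, ∑ m, f s r q m)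
      = ∑ q, ∑ s, ∑ r, ∑ m, f s r q m := sum3_perm_312 (fun s r q => ∑ m, f s r q m)
    _ = ∑ q, ∑ r, ∑ s, ∑ m, f s r q m := Finset.sum_congr rfl fun _ _ => Finset.sum_comm
    _ = ∑ q, ∑ r, ∑ m, ∑ s, f s r q m :=
        Finset.sum_congr rfl fun _ _ => Finset.sum_congr rfl fun _ _ => Finset.sum_comm

lemma sum4_rot (f : Fin n → Fin n → Fin n → Fin n → ℝ) :
    (∑ a, ∑ b, ∑ c, ∑ d, f a b c d) = ∑ b, ∑ c, ∑ d, ∑ a, f a b c d :=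
  calc (∑ a, ∑ b, ∑ c, ∑ d, f a b c d)
      = ∑ b, ∑ a, ∑ c, ∑ d, f a b c d := Finset.sum_comm
    _ = ∑ b, ∑ c, ∑ d, ∑ a, f a b c d :=
        Finset.sum_congr rfl fun b _ => sum3_perm_231 (fun a c d => f a b c d)

lemma sum4_swap23 (f : Fin n → Fin n → Fin n → Fin n → ℝ) :
    (∑ s, ∑ r, ∑ q, ∑ m, f s r q m) = ∑ s, ∑ q, ∑ r, ∑ m, f s r q m :=
  Finset.sum_congr rfl fun _ _ => Finset.sum_comm

/-! ### The canonical contraction -/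

/-- Canonical contraction `∑_{m,x,y} X^{m p} Y^{q x} Q_{m,x,y} Z^{y r}`. -/
noncomputable def Cq (X Y Z : Fin n → Fin n → ℝ) (Q : Fin n → Fin n → Fin n → ℝ) (p q r : Fin n) : ℝ :=
  ∑ m, ∑ x, ∑ y, X m p * Y q x * Q m x y * Z y r

lemma Cq_swap (X : Fin n → Fin n → ℝ) {Y Z : Fin n → Fin n → ℝ}
    {Q : Fin n → Fin n → Fin n → ℝ}
    (hY : ∀ i j, Y i j = Y j i) (hZ : ∀ i j, Z i j = Z j i)
    (hQ : ∀ m x y, Q m x y = Q m y x) (p q r : Fin n) :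
    Cq X Y Z Q p q r = Cq X Z Y Q p r q := by
  unfold Cq
  refine Finset.sum_congr rfl fun m _ => ?_
  refine Finset.sum_comm.trans ?_
  refine Finset.sum_congr rfl fun x _ => Finset.sum_congr rfl fun y _ => ?_
  rw [hQ m y x, hY q y, hZ x r]
  ring

/-! ### The right-hand side: `M`-tensor in algebraic form -/

/-- `Gam Y Q j k s` is `christoffelUp` written algebraically. -/
noncomputable def Gam (Y : Fin n → Fin n → ℝ) (Q : Fin n → Fin n → Fin n → ℝ) (j k s : Fin n) : ℝ :=
  ∑ t, Y j t * ((1 / 2) * ∑ c, Y k c * (Q t c s + Q s t c - Q c t s))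

noncomputable def SS (X Y : Fin n → Fin n → ℝ) (Q : Fin n → Fin n → Fin n → ℝ) (i j k : Fin n) : ℝ :=
  ∑ s, X i s * Gam Y Q j k s

noncomputable def Mform (A B : Fin n → Fin n → ℝ) (Q1 Q2 : Fin n → Fin n → Fin n → ℝ) (i j k : Fin n) : ℝ :=
  ∑ s, (A i s * Gam B Q2 j k s - B j s * Gam A Q1 i k s
      - A j s * Gam B Q2 i k s + B i s * Gam A Q1 j k s)

lemma Mform_split (A B : Fin n → Fin n → ℝ) (Q1 Q2 : Fin n → Fin n → Fin n → ℝ)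
    (i j k : Fin n) :
    Mform A B Q1 Q2 i j k
      = SS A B Q2 i j k - SS B A Q1 j i k - SS A B Q2 j i k + SS B A Q1 i j k := by
  unfold Mform SS
  simp only [Finset.sum_add_distrib, Finset.sum_sub_distrib]

lemma S_decomp (X Y : Fin n → Fin n → ℝ) (Q : Fin n → Fin n → Fin n → ℝ)
    (hX : ∀ i j, X i j = X j i) (hY : ∀ i j, Y i j = Y j i) (i j k : Fin n) :
    2 * SS X Y Q i j k
      = Cq Y Y X Q j k i + Cq X Y Y Q i j k - Cq Y Y X Q k j i := by
  have h : SS X Y Q i j k = ∑ s, ∑ t, ∑ c, (1 / 2) *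
      (X i s * Y j t * Y k c * Q t c s + X i s * Y j t * Y k c * Q s t c
        - X i s * Y j t * Y k c * Q c t s) := by
    unfold SS Gam
    simp only [Finset.mul_sum]
    exact Finset.sum_congr rfl fun s _ => Finset.sum_congr rfl fun t _ =>
      Finset.sum_congr rfl fun c _ => by ring
  have h1 : (∑ s, ∑ t, ∑ c, X i s * Y j t * Y k c * Q t c s) = Cq Y Y X Q j k i := by
    refine (sum3_perm_231 fun s t c => X i s * Y j t * Y k c * Q t c s).trans ?_
    unfold Cq
    refine Finset.sum_congr rfl fun t _ => Finset.sum_congr rfl fun c _ =>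
      Finset.sum_congr rfl fun s _ => ?_
    rw [hX i s, hY j t]; ring
  have h2 : (∑ s, ∑ t, ∑ c, X i s * Y j t * Y k c * Q s t c) = Cq X Y Y Q i j k := by
    unfold Cq
    refine Finset.sum_congr rfl fun s _ => Finset.sum_congr rfl fun t _ =>
      Finset.sum_congr rfl fun c _ => ?_
    rw [hX i s, hY k c]; ring
  have h3 : (∑ s, ∑ t, ∑ c, X i s * Y j t * Y k c * Q c t s) = Cq Y Y X Q k j i := by
    refine (sum3_perm_321 fun s t c => X i s * Y j t * Y k c * Q c t s).trans ?_
    unfold Cq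
    refine Finset.sum_congr rfl fun c _ => Finset.sum_congr rfl fun t _ =>
      Finset.sum_congr rfl fun s _ => ?_
    rw [hX i s, hY k c]; ring
  calc 2 * SS X Y Q i j k
      = ∑ s, ∑ t, ∑ c, (X i s * Y j t * Y k c * Q t c s + X i s * Y j t * Y k c * Q s t c
          - X i s * Y j t * Y k c * Q c t s) := by
        rw [h]; simp only [Finset.mul_sum]
        exact Finset.sum_congr rfl fun s _ => Finset.sum_congr rfl fun t _ =>
          Finset.sum_congr rfl fun c _ => by ring
    _ = (∑ s, ∑ t, ∑ c, X i s * Y j t * Y k c * Q t c s)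
        + (∑ s, ∑ t, ∑ c, X i s * Y j t * Y k c * Q s t c)
        - (∑ s, ∑ t, ∑ c, X i s * Y j t * Y k c * Q c t s) := by
        simp only [Finset.sum_add_distrib, Finset.sum_sub_distrib]
    _ = Cq Y Y X Q j k i + Cq X Y Y Q i j k - Cq Y Y X Q k j i := by rw [h1, h2, h3]

lemma rhs_eq (A B : Fin n → Fin n → ℝ) (Q1 Q2 : Fin n → Fin n → Fin n → ℝ)
    (hA : ∀ i j, A i j = A j i) (hB : ∀ i j, B i j = B j i)
    (hQ1 : ∀ m x y, Q1 m x y = Q1 m y x) (hQ2 : ∀ m x y, Q2 m x y = Q2 m y x)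
    (i j k : Fin n) :
    Mform A B Q1 Q2 k j i + Mform A B Q1 Q2 i k j + Mform A B Q1 Q2 i j k
      = Cq A B B Q2 i k j - Cq A B A Q1 i k j - Cq A B B Q2 j k i + Cq A B A Q1 j k i
        + Cq B A B Q2 j k i - Cq B A A Q1 j k i - Cq B A B Q2 i k j + Cq B A A Q1 i k j := by
  rw [Mform_split, Mform_split, Mform_split]
  have dA : ∀ p q r, 2 * SS A B Q2 p q r
      = Cq B B A Q2 q r p + Cq A B B Q2 p q r - Cq B B A Q2 r q p :=
    fun p q r => S_decomp A B Q2 hA hB p q r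
  have dB : ∀ p q r, 2 * SS B A Q1 p q r
      = Cq A A B Q1 q r p + Cq B A A Q1 p q r - Cq A A B Q1 r q p :=
    fun p q r => S_decomp B A Q1 hB hA p q r
  have e1 : Cq A B B Q2 k j i = Cq A B B Q2 k i j := Cq_swap A hB hB hQ2 k j i
  have e2 : Cq A B B Q2 i j k = Cq A B B Q2 i k j := Cq_swap A hB hB hQ2 i j k
  have e3 : Cq A B B Q2 j i k = Cq A B B Q2 j k i := Cq_swap A hB hB hQ2 j i k
  have e4 : Cq B B A Q2 j i k = Cq B A B Q2 j k i := Cq_swap B hB hA hQ2 j i k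
  have e5 : Cq B B A Q2 i j k = Cq B A B Q2 i k j := Cq_swap B hB hA hQ2 i j k
  have e6 : Cq B A A Q1 k j i = Cq B A A Q1 k i j := Cq_swap B hA hA hQ1 k j i
  have e7 : Cq B A A Q1 i j k = Cq B A A Q1 i k j := Cq_swap B hA hA hQ1 i j k
  have e8 : Cq B A A Q1 j i k = Cq B A A Q1 j k i := Cq_swap B hA hA hQ1 j i k
  have e9 : Cq A A B Q1 j i k = Cq A B A Q1 j k i := Cq_swap A hA hB hQ1 j i k
  have e10 : Cq A A B Q1 i j k = Cq A B A Q1 i k j := Cq_swap A hA hB hQ1 i j k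
  linarith [dA k j i, dA j k i, dA i k j, dA k i j, dA i j k, dA j i k,
    dB k j i, dB j k i, dB i k j, dB k i j, dB i j k, dB j i k,
    e1, e2, e3, e4, e5, e6, e7, e8, e9, e10]

end NijenhuisAux
namespace NijenhuisAux

variable {n : ℕ}

/-! ### Left-hand side: contraction of the Nijenhuis tensor -/

lemma collapse_av (A a b : Fin n → Fin n → ℝ) (v : Fin n → Fin n → ℝ)
    (haA : ∀ s t, (∑ p, a s p * A p t) = if s = t then (1 : ℝ) else 0)
    (hv : ∀ k t, v k t = ∑ c, A k c * b c t) (s m : Fin n) :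
    (∑ p, a s p * v p m) = b s m := by
  calc (∑ p, a s p * v p m) = ∑ p, ∑ c, a s p * A p c * b c m := by
        refine Finset.sum_congr rfl fun p _ => ?_
        rw [hv, Finset.mul_sum]
        exact Finset.sum_congr rfl fun c _ => by ring
    _ = ∑ c, ∑ p, a s p * A p c * b c m := Finset.sum_comm
    _ = ∑ c, (∑ p, a s p * A p c) * b c m :=
        Finset.sum_congr rfl fun c _ => (Finset.sum_mul _ _ _).symm
    _ = ∑ c, (if s = c then (1 : ℝ) else 0) * b c m := by
        refine Finset.sum_congr rfl fun c _ => ?_; rw [haA]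
    _ = b s m := by simp

lemma collapse_aV (A a b : Fin n → Fin n → ℝ) (Q1 Q2 V : Fin n → Fin n → Fin n → ℝ)
    (haA : ∀ s t, (∑ p, a s p * A p t) = if s = t then (1 : ℝ) else 0)
    (hV : ∀ m k t, V m k t = (∑ c, A k c * Q2 m c t)
      - ∑ c, ∑ d, ∑ e, A k c * Q1 m c d * A d e * b e t) (s m q : Fin n) :
    (∑ p, a s p * V m p q) = Q2 m s q - ∑ c, ∑ d, Q1 m s c * A c d * b d q := by
  have h1 : (∑ p, a s p * (∑ c, A p c * Q2 m c q)) = Q2 m s q := by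
    calc (∑ p, a s p * (∑ c, A p c * Q2 m c q))
        = ∑ p, ∑ c, a s p * A p c * Q2 m c q := by
          refine Finset.sum_congr rfl fun p _ => ?_
          rw [Finset.mul_sum]
          exact Finset.sum_congr rfl fun c _ => by ring
      _ = ∑ c, ∑ p, a s p * A p c * Q2 m c q := Finset.sum_comm
      _ = ∑ c, (∑ p, a s p * A p c) * Q2 m c q :=
          Finset.sum_congr rfl fun c _ => (Finset.sum_mul _ _ _).symm
      _ = ∑ c, (if s = c then (1 : ℝ) else 0) * Q2 m c q := by
          refine Finset.sum_congr rfl fun c _ => ?_; rw [haA]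
      _ = Q2 m s q := by simp
  have h2 : (∑ p, a s p * (∑ c, ∑ d, ∑ e, A p c * Q1 m c d * A d e * b e q))
      = ∑ c, ∑ d, Q1 m s c * A c d * b d q := by
    calc (∑ p, a s p * (∑ c, ∑ d, ∑ e, A p c * Q1 m c d * A d e * b e q))
        = ∑ p, ∑ c, ∑ d, ∑ e, a s p * A p c * (Q1 m c d * A d e * b e q) := by
          refine Finset.sum_congr rfl fun p _ => ?_
          simp only [Finset.mul_sum]
          exact Finset.sum_congr rfl fun c _ => Finset.sum_congr rfl fun d _ =>
            Finset.sum_congr rfl fun e _ => by ring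
      _ = ∑ c, ∑ d, ∑ e, ∑ p, a s p * A p c * (Q1 m c d * A d e * b e q) :=
          sum4_rot (fun p c d e => a s p * A p c * (Q1 m c d * A d e * b e q))
      _ = ∑ c, ∑ d, ∑ e, (∑ p, a s p * A p c) * (Q1 m c d * A d e * b e q) :=
          Finset.sum_congr rfl fun c _ => Finset.sum_congr rfl fun d _ =>
            Finset.sum_congr rfl fun e _ => (Finset.sum_mul _ _ _).symm
      _ = ∑ c, ∑ d, ∑ e, (if s = c then (1 : ℝ) else 0) * (Q1 m c d * A d e * b e q) := by
          refine Finset.sum_congr rfl fun c _ => Finset.sum_congr rfl fun d _ =>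
            Finset.sum_congr rfl fun e _ => ?_
          rw [haA]
      _ = ∑ c, (if s = c then (1 : ℝ) else 0) * (∑ d, ∑ e, Q1 m c d * A d e * b e q) := by
          refine Finset.sum_congr rfl fun c _ => ?_
          rw [Finset.mul_sum]
          exact Finset.sum_congr rfl fun d _ => (Finset.mul_sum _ _ _).symm
      _ = ∑ d, ∑ e, Q1 m s d * A d e * b e q := by simp
      _ = ∑ c, ∑ d, Q1 m s c * A c d * b d q := rfl
  calc (∑ p, a s p * V m p q)
      = ∑ p, (a s p * (∑ c, A p c * Q2 m c q)
          - a s p * (∑ c, ∑ d, ∑ e, A p c * Q1 m c d * A d e * b e q)) := by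
        refine Finset.sum_congr rfl fun p _ => ?_
        rw [hV]; ring
    _ = (∑ p, a s p * (∑ c, A p c * Q2 m c q))
        - ∑ p, a s p * (∑ c, ∑ d, ∑ e, A p c * Q1 m c d * A d e * b e q) :=
        Finset.sum_sub_distrib _ _
    _ = Q2 m s q - ∑ c, ∑ d, Q1 m s c * A c d * b d q := by rw [h1, h2]

lemma collapse_vB (A b B : Fin n → Fin n → ℝ) (v : Fin n → Fin n → ℝ)
    (hbB : ∀ s t, (∑ p, b s p * B p t) = if s = t then (1 : ℝ) else 0)
    (hv : ∀ k t, v k t = ∑ c, A k c * b c t) (m p' : Fin n) :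
    (∑ r, v m r * B r p') = A m p' := by
  calc (∑ r, v m r * B r p') = ∑ r, ∑ c, A m c * b c r * B r p' := by
        refine Finset.sum_congr rfl fun r _ => ?_
        rw [hv, Finset.sum_mul]
    _ = ∑ c, ∑ r, A m c * b c r * B r p' := Finset.sum_comm
    _ = ∑ c, A m c * ∑ r, b c r * B r p' := by
        refine Finset.sum_congr rfl fun c _ => ?_
        rw [Finset.mul_sum]
        exact Finset.sum_congr rfl fun r _ => by ring
    _ = ∑ c, A m c * (if c = p' then (1 : ℝ) else 0) := by
        refine Finset.sum_congr rfl fun c _ => ?_; rw [hbB]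
    _ = A m p' := by simp

lemma collapse_bB (b B : Fin n → Fin n → ℝ)
    (hbB : ∀ s t, (∑ p, b s p * B p t) = if s = t then (1 : ℝ) else 0)
    (hb : ∀ i j, b i j = b j i) (m k : Fin n) :
    (∑ s, b s m * B s k) = if m = k then (1 : ℝ) else 0 := by
  calc (∑ s, b s m * B s k) = ∑ s, b m s * B s k :=
        Finset.sum_congr rfl fun s _ => by rw [hb s m]
    _ = if m = k then (1 : ℝ) else 0 := hbB m k

lemma collapse_ANB (A b B : Fin n → Fin n → ℝ) (Q1 Q2 : Fin n → Fin n → Fin n → ℝ)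
    (hbB : ∀ s t, (∑ p, b s p * B p t) = if s = t then (1 : ℝ) else 0)
    (s m j' : Fin n) :
    (∑ q, (Q2 m s q - ∑ c, ∑ d, Q1 m s c * A c d * b d q) * B q j')
      = (∑ t, Q2 m s t * B t j') - ∑ c, Q1 m s c * A c j' := by
  have h2 : (∑ q, (∑ c, ∑ d, Q1 m s c * A c d * b d q) * B q j')
      = ∑ c, Q1 m s c * A c j' := by
    calc (∑ q, (∑ c, ∑ d, Q1 m s c * A c d * b d q) * B q j')
        = ∑ q, ∑ c, ∑ d, Q1 m s c * A c d * b d q * B q j' := by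
          refine Finset.sum_congr rfl fun q _ => ?_
          rw [Finset.sum_mul]
          exact Finset.sum_congr rfl fun c _ => by rw [Finset.sum_mul]
      _ = ∑ c, ∑ d, ∑ q, Q1 m s c * A c d * b d q * B q j' :=
          sum3_perm_231 (fun q c d => Q1 m s c * A c d * b d q * B q j')
      _ = ∑ c, ∑ d, Q1 m s c * A c d * (∑ q, b d q * B q j') := by
          refine Finset.sum_congr rfl fun c _ => Finset.sum_congr rfl fun d _ => ?_
          rw [Finset.mul_sum]
          exact Finset.sum_congr rfl fun q _ => by ring
      _ = ∑ c, ∑ d, Q1 m s c * A c d * (if d = j' then (1 : ℝ) else 0) := by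
          refine Finset.sum_congr rfl fun c _ => Finset.sum_congr rfl fun d _ => ?_
          rw [hbB]
      _ = ∑ c, Q1 m s c * A c j' := by
          refine Finset.sum_congr rfl fun c _ => ?_
          simp [mul_ite]
  calc (∑ q, (Q2 m s q - ∑ c, ∑ d, Q1 m s c * A c d * b d q) * B q j')
      = (∑ q, Q2 m s q * B q j')
        - ∑ q, (∑ c, ∑ d, Q1 m s c * A c d * b d q) * B q j' := by
        rw [← Finset.sum_sub_distrib]
        exact Finset.sum_congr rfl fun q _ => by ring
    _ = (∑ t, Q2 m s t * B t j') - ∑ c, Q1 m s c * A c j' := by rw [h2]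

lemma collapse_VB (A b B : Fin n → Fin n → ℝ) (Q1 Q2 V : Fin n → Fin n → Fin n → ℝ)
    (hbB : ∀ s t, (∑ p, b s p * B p t) = if s = t then (1 : ℝ) else 0)
    (hV : ∀ m k t, V m k t = (∑ c, A k c * Q2 m c t)
      - ∑ c, ∑ d, ∑ e, A k c * Q1 m c d * A d e * b e t) (q' m p' : Fin n) :
    (∑ r, V q' m r * B r p')
      = (∑ t, ∑ r, A m t * Q2 q' t r * B r p') - ∑ t, ∑ c, A m t * Q1 q' t c * A c p' := by
  have ha : (∑ r, (∑ c, A m c * Q2 q' c r) * B r p')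
      = ∑ t, ∑ r, A m t * Q2 q' t r * B r p' := by
    calc (∑ r, (∑ c, A m c * Q2 q' c r) * B r p')
        = ∑ r, ∑ c, A m c * Q2 q' c r * B r p' :=
          Finset.sum_congr rfl fun r _ => Finset.sum_mul _ _ _
      _ = ∑ c, ∑ r, A m c * Q2 q' c r * B r p' := Finset.sum_comm
  have hbb : (∑ r, (∑ c, ∑ d, ∑ e, A m c * Q1 q' c d * A d e * b e r) * B r p')
      = ∑ t, ∑ c, A m t * Q1 q' t c * A c p' := by
    calc (∑ r, (∑ c, ∑ d, ∑ e, A m c * Q1 q' c d * A d e * b e r) * B r p')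
        = ∑ r, ∑ c, ∑ d, ∑ e, A m c * Q1 q' c d * A d e * b e r * B r p' := by
          refine Finset.sum_congr rfl fun r _ => ?_
          simp only [Finset.sum_mul]
      _ = ∑ c, ∑ d, ∑ e, ∑ r, A m c * Q1 q' c d * A d e * b e r * B r p' :=
          sum4_rot (fun r c d e => A m c * Q1 q' c d * A d e * b e r * B r p')
      _ = ∑ c, ∑ d, ∑ e, A m c * Q1 q' c d * A d e * (∑ r, b e r * B r p') := by
          refine Finset.sum_congr rfl fun c _ => Finset.sum_congr rfl fun d _ =>
            Finset.sum_congr rfl fun e _ => ?_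
          rw [Finset.mul_sum]
          exact Finset.sum_congr rfl fun r _ => by ring
      _ = ∑ c, ∑ d, ∑ e, A m c * Q1 q' c d * A d e * (if e = p' then (1 : ℝ) else 0) := by
          refine Finset.sum_congr rfl fun c _ => Finset.sum_congr rfl fun d _ =>
            Finset.sum_congr rfl fun e _ => ?_
          rw [hbB]
      _ = ∑ c, ∑ d, A m c * Q1 q' c d * A d p' := by
          refine Finset.sum_congr rfl fun c _ => Finset.sum_congr rfl fun d _ => ?_
          simp [mul_ite]
  calc (∑ r, V q' m r * B r p')
      = (∑ r, (∑ c, A m c * Q2 q' c r) * B r p')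
        - ∑ r, (∑ c, ∑ d, ∑ e, A m c * Q1 q' c d * A d e * b e r) * B r p' := by
        rw [← Finset.sum_sub_distrib]
        refine Finset.sum_congr rfl fun r _ => ?_
        rw [hV]; ring
    _ = _ := by rw [ha, hbb]

end NijenhuisAux
namespace NijenhuisAux

variable {n : ℕ}

lemma contract_aN (A B a b : Fin n → Fin n → ℝ) (Q1 Q2 V : Fin n → Fin n → Fin n → ℝ)
    (v : Fin n → Fin n → ℝ) (Nf : Fin n → Fin n → Fin n → ℝ)
    (haA : ∀ s t, (∑ p, a s p * A p t) = if s = t then (1 : ℝ) else 0)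
    (hv : ∀ k t, v k t = ∑ c, A k c * b c t)
    (hV : ∀ m k t, V m k t = (∑ c, A k c * Q2 m c t)
      - ∑ c, ∑ d, ∑ e, A k c * Q1 m c d * A d e * b e t)
    (hN : ∀ p r q, Nf p r q = ∑ m, (v m r * V m p q - v m q * V m p r
      + v p m * V q m r - v p m * V r m q))
    (s r q : Fin n) :
    (∑ p, a s p * Nf p r q)
      = ∑ m, (v m r * (Q2 m s q - ∑ c, ∑ d, Q1 m s c * A c d * b d q)
            - v m q * (Q2 m s r - ∑ c, ∑ d, Q1 m s c * A c d * b d r)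
            + b s m * V q m r - b s m * V r m q) := by
  calc (∑ p, a s p * Nf p r q)
      = ∑ p, ∑ m, (v m r * (a s p * V m p q) - v m q * (a s p * V m p r)
          + (a s p * v p m) * V q m r - (a s p * v p m) * V r m q) := by
        refine Finset.sum_congr rfl fun p _ => ?_
        rw [hN, Finset.mul_sum]
        exact Finset.sum_congr rfl fun m _ => by ring
    _ = ∑ m, ∑ p, (v m r * (a s p * V m p q) - v m q * (a s p * V m p r)
          + (a s p * v p m) * V q m r - (a s p * v p m) * V r m q) := Finset.sum_comm
    _ = ∑ m, (v m r * (∑ p, a s p * V m p q) - v m q * (∑ p, a s p * V m p r)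
          + (∑ p, a s p * v p m) * V q m r - (∑ p, a s p * v p m) * V r m q) := by
        refine Finset.sum_congr rfl fun m _ => ?_
        rw [Finset.sum_sub_distrib, Finset.sum_add_distrib, Finset.sum_sub_distrib,
          ← Finset.mul_sum, ← Finset.mul_sum, ← Finset.sum_mul, ← Finset.sum_mul]
    _ = ∑ m, (v m r * (Q2 m s q - ∑ c, ∑ d, Q1 m s c * A c d * b d q)
          - v m q * (Q2 m s r - ∑ c, ∑ d, Q1 m s c * A c d * b d r)
          + b s m * V q m r - b s m * V r m q) := by
        refine Finset.sum_congr rfl fun m _ => ?_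
        rw [collapse_aV A a b Q1 Q2 V haA hV s m q, collapse_aV A a b Q1 Q2 V haA hV s m r,
          collapse_av A a b v haA hv s m]

lemma TA_eval (A B a b : Fin n → Fin n → ℝ) (Q1 Q2 : Fin n → Fin n → Fin n → ℝ)
    (v : Fin n → Fin n → ℝ)
    (hB : ∀ i j, B i j = B j i)
    (hbB : ∀ s t, (∑ p, b s p * B p t) = if s = t then (1 : ℝ) else 0)
    (hv : ∀ k t, v k t = ∑ c, A k c * b c t)
    (p' q' k : Fin n) :
    (∑ s, ∑ r, ∑ x, ∑ m, v m r * (Q2 m s x - ∑ c, ∑ d, Q1 m s c * A c d * b d x)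
        * (B r p' * B x q' * B s k))
      = Cq A B B Q2 p' k q' - Cq A B A Q1 p' k q' := by
  calc (∑ s, ∑ r, ∑ x, ∑ m, v m r * (Q2 m s x - ∑ c, ∑ d, Q1 m s c * A c d * b d x)
        * (B r p' * B x q' * B s k))
      = ∑ m, ∑ s, ∑ x, ∑ r, v m r * (Q2 m s x - ∑ c, ∑ d, Q1 m s c * A c d * b d x)
          * (B r p' * B x q' * B s k) :=
        sum4_perm_a (fun s r x m => v m r * (Q2 m s x - ∑ c, ∑ d, Q1 m s c * A c d * b d x)
          * (B r p' * B x q' * B s k))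
    _ = ∑ m, ∑ s, ∑ x, (∑ r, v m r * B r p')
          * ((Q2 m s x - ∑ c, ∑ d, Q1 m s c * A c d * b d x) * (B x q' * B s k)) := by
        refine Finset.sum_congr rfl fun m _ => Finset.sum_congr rfl fun s _ =>
          Finset.sum_congr rfl fun x _ => ?_
        rw [Finset.sum_mul]
        exact Finset.sum_congr rfl fun r _ => by ring
    _ = ∑ m, ∑ s, ∑ x, A m p'
          * ((Q2 m s x - ∑ c, ∑ d, Q1 m s c * A c d * b d x) * (B x q' * B s k)) := by
        refine Finset.sum_congr rfl fun m _ => Finset.sum_congr rfl fun s _ =>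
          Finset.sum_congr rfl fun x _ => ?_
        rw [collapse_vB A b B v hbB hv m p']
    _ = ∑ m, ∑ s, (A m p' * B s k)
          * (∑ x, (Q2 m s x - ∑ c, ∑ d, Q1 m s c * A c d * b d x) * B x q') := by
        refine Finset.sum_congr rfl fun m _ => Finset.sum_congr rfl fun s _ => ?_
        rw [Finset.mul_sum]
        exact Finset.sum_congr rfl fun x _ => by ring
    _ = ∑ m, ∑ s, (A m p' * B s k)
          * ((∑ t, Q2 m s t * B t q') - ∑ c, Q1 m s c * A c q') := by
        refine Finset.sum_congr rfl fun m _ => Finset.sum_congr rfl fun s _ => ?_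
        rw [collapse_ANB A b B Q1 Q2 hbB s m q']
    _ = (∑ m, ∑ s, ∑ t, A m p' * B s k * (Q2 m s t * B t q'))
        - ∑ m, ∑ s, ∑ c, A m p' * B s k * (Q1 m s c * A c q') := by
        rw [← Finset.sum_sub_distrib]
        refine Finset.sum_congr rfl fun m _ => ?_
        rw [← Finset.sum_sub_distrib]
        refine Finset.sum_congr rfl fun s _ => ?_
        rw [mul_sub, Finset.mul_sum, Finset.mul_sum]
    _ = Cq A B B Q2 p' k q' - Cq A B A Q1 p' k q' := by
        unfold Cq
        congr 1
        · refine Finset.sum_congr rfl fun m _ => Finset.sum_congr rfl fun s _ =>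
            Finset.sum_congr rfl fun t _ => ?_
          rw [hB s k]; ring
        · refine Finset.sum_congr rfl fun m _ => Finset.sum_congr rfl fun s _ =>
            Finset.sum_congr rfl fun c _ => ?_
          rw [hB s k]; ring

lemma TC_eval (A B b : Fin n → Fin n → ℝ) (Q1 Q2 V : Fin n → Fin n → Fin n → ℝ)
    (hbB : ∀ s t, (∑ p, b s p * B p t) = if s = t then (1 : ℝ) else 0)
    (hb : ∀ i j, b i j = b j i)
    (hV : ∀ m k t, V m k t = (∑ c, A k c * Q2 m c t)
      - ∑ c, ∑ d, ∑ e, A k c * Q1 m c d * A d e * b e t)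
    (p' q' k : Fin n) :
    (∑ s, ∑ r, ∑ x, ∑ m, b s m * V x m r * (B r p' * B x q' * B s k))
      = Cq B A B Q2 q' k p' - Cq B A A Q1 q' k p' := by
  calc (∑ s, ∑ r, ∑ x, ∑ m, b s m * V x m r * (B r p' * B x q' * B s k))
      = ∑ x, ∑ r, ∑ m, ∑ s, b s m * V x m r * (B r p' * B x q' * B s k) :=
        sum4_perm_c (fun s r x m => b s m * V x m r * (B r p' * B x q' * B s k))
    _ = ∑ x, ∑ r, ∑ m, (∑ s, b s m * B s k) * (V x m r * (B r p' * B x q')) := by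
        refine Finset.sum_congr rfl fun x _ => Finset.sum_congr rfl fun r _ =>
          Finset.sum_congr rfl fun m _ => ?_
        rw [Finset.sum_mul]
        exact Finset.sum_congr rfl fun s _ => by ring
    _ = ∑ x, ∑ r, ∑ m, (if m = k then (1 : ℝ) else 0) * (V x m r * (B r p' * B x q')) := by
        refine Finset.sum_congr rfl fun x _ => Finset.sum_congr rfl fun r _ =>
          Finset.sum_congr rfl fun m _ => ?_
        rw [collapse_bB b B hbB hb m k]
    _ = ∑ x, ∑ r, V x k r * (B r p' * B x q') := by
        refine Finset.sum_congr rfl fun x _ => Finset.sum_congr rfl fun r _ => ?_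
        simp
    _ = ∑ x, (∑ r, V x k r * B r p') * B x q' := by
        refine Finset.sum_congr rfl fun x _ => ?_
        rw [Finset.sum_mul]
        exact Finset.sum_congr rfl fun r _ => by ring
    _ = ∑ x, ((∑ t, ∑ r, A k t * Q2 x t r * B r p') - ∑ t, ∑ c, A k t * Q1 x t c * A c p')
          * B x q' := by
        refine Finset.sum_congr rfl fun x _ => ?_
        rw [collapse_VB A b B Q1 Q2 V hbB hV x k p']
    _ = (∑ x, ∑ t, ∑ r, A k t * Q2 x t r * B r p' * B x q')
        - ∑ x, ∑ t, ∑ c, A k t * Q1 x t c * A c p' * B x q' := by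
        rw [← Finset.sum_sub_distrib]
        refine Finset.sum_congr rfl fun x _ => ?_
        rw [sub_mul, Finset.sum_mul, Finset.sum_mul]
        congr 1 <;> (refine Finset.sum_congr rfl fun t _ => ?_; rw [Finset.sum_mul])
    _ = Cq B A B Q2 q' k p' - Cq B A A Q1 q' k p' := by
        unfold Cq
        congr 1
        · refine Finset.sum_congr rfl fun x _ => Finset.sum_congr rfl fun t _ =>
            Finset.sum_congr rfl fun r _ => ?_
          ring
        · refine Finset.sum_congr rfl fun x _ => Finset.sum_congr rfl fun t _ =>
            Finset.sum_congr rfl fun c _ => ?_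
          ring

lemma lhs_eq (A B a b : Fin n → Fin n → ℝ) (Q1 Q2 V : Fin n → Fin n → Fin n → ℝ)
    (v : Fin n → Fin n → ℝ) (Nf : Fin n → Fin n → Fin n → ℝ)
    (hB : ∀ i j, B i j = B j i) (hb : ∀ i j, b i j = b j i)
    (haA : ∀ s t, (∑ p, a s p * A p t) = if s = t then (1 : ℝ) else 0)
    (hbB : ∀ s t, (∑ p, b s p * B p t) = if s = t then (1 : ℝ) else 0)
    (hv : ∀ k t, v k t = ∑ c, A k c * b c t)
    (hV : ∀ m k t, V m k t = (∑ c, A k c * Q2 m c t)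
      - ∑ c, ∑ d, ∑ e, A k c * Q1 m c d * A d e * b e t)
    (hN : ∀ p r q, Nf p r q = ∑ m, (v m r * V m p q - v m q * V m p r
      + v p m * V q m r - v p m * V r m q))
    (i j k : Fin n) :
    (∑ s, ∑ p, ∑ r, ∑ q, a s p * Nf p r q * B r i * B q j * B s k)
      = Cq A B B Q2 i k j - Cq A B A Q1 i k j - Cq A B B Q2 j k i + Cq A B A Q1 j k i
        + Cq B A B Q2 j k i - Cq B A A Q1 j k i - Cq B A B Q2 i k j + Cq B A A Q1 i k j := by
  have hTb : (∑ s, ∑ r, ∑ q, ∑ m, v m q * (Q2 m s r - ∑ c, ∑ d, Q1 m s c * A c d * b d r)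
        * (B r i * B q j * B s k))
      = Cq A B B Q2 j k i - Cq A B A Q1 j k i := by
    calc (∑ s, ∑ r, ∑ q, ∑ m, v m q * (Q2 m s r - ∑ c, ∑ d, Q1 m s c * A c d * b d r)
          * (B r i * B q j * B s k))
        = ∑ s, ∑ q, ∑ r, ∑ m, v m q * (Q2 m s r - ∑ c, ∑ d, Q1 m s c * A c d * b d r)
            * (B r i * B q j * B s k) :=
          sum4_swap23 (fun s r q m => v m q * (Q2 m s r - ∑ c, ∑ d, Q1 m s c * A c d * b d r)
            * (B r i * B q j * B s k))
      _ = ∑ s, ∑ r, ∑ x, ∑ m, v m r * (Q2 m s x - ∑ c, ∑ d, Q1 m s c * A c d * b d x)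
            * (B r j * B x i * B s k) := by
          refine Finset.sum_congr rfl fun s _ => Finset.sum_congr rfl fun r _ =>
            Finset.sum_congr rfl fun x _ => Finset.sum_congr rfl fun m _ => ?_
          ring
      _ = Cq A B B Q2 j k i - Cq A B A Q1 j k i := TA_eval A B a b Q1 Q2 v hB hbB hv j i k
  have hTd : (∑ s, ∑ r, ∑ q, ∑ m, b s m * V r m q * (B r i * B q j * B s k))
      = Cq B A B Q2 i k j - Cq B A A Q1 i k j := by
    calc (∑ s, ∑ r, ∑ q, ∑ m, b s m * V r m q * (B r i * B q j * B s k))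
        = ∑ s, ∑ q, ∑ r, ∑ m, b s m * V r m q * (B r i * B q j * B s k) :=
          sum4_swap23 (fun s r q m => b s m * V r m q * (B r i * B q j * B s k))
      _ = ∑ s, ∑ r, ∑ x, ∑ m, b s m * V x m r * (B r j * B x i * B s k) := by
          refine Finset.sum_congr rfl fun s _ => Finset.sum_congr rfl fun r _ =>
            Finset.sum_congr rfl fun x _ => Finset.sum_congr rfl fun m _ => ?_
          ring
      _ = Cq B A B Q2 i k j - Cq B A A Q1 i k j := TC_eval A B b Q1 Q2 V hbB hb hV j i k
  calc (∑ s, ∑ p, ∑ r, ∑ q, a s p * Nf p r q * B r i * B q j * B s k)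
      = ∑ s, ∑ r, ∑ q, ∑ p, a s p * Nf p r q * B r i * B q j * B s k :=
        Finset.sum_congr rfl fun s _ =>
          sum3_perm_231 (fun p r q => a s p * Nf p r q * B r i * B q j * B s k)
    _ = ∑ s, ∑ r, ∑ q, (∑ p, a s p * Nf p r q) * (B r i * B q j * B s k) := by
        refine Finset.sum_congr rfl fun s _ => Finset.sum_congr rfl fun r _ =>
          Finset.sum_congr rfl fun q _ => ?_
        rw [Finset.sum_mul]
        exact Finset.sum_congr rfl fun p _ => by ring
    _ = ∑ s, ∑ r, ∑ q, ∑ m,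
          (v m r * (Q2 m s q - ∑ c, ∑ d, Q1 m s c * A c d * b d q) * (B r i * B q j * B s k)
          - v m q * (Q2 m s r - ∑ c, ∑ d, Q1 m s c * A c d * b d r) * (B r i * B q j * B s k)
          + b s m * V q m r * (B r i * B q j * B s k)
          - b s m * V r m q * (B r i * B q j * B s k)) := by
        refine Finset.sum_congr rfl fun s _ => Finset.sum_congr rfl fun r _ =>
          Finset.sum_congr rfl fun q _ => ?_
        rw [contract_aN A B a b Q1 Q2 V v Nf haA hv hV hN s r q, Finset.sum_mul]
        exact Finset.sum_congr rfl fun m _ => by ring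
    _ = (∑ s, ∑ r, ∑ q, ∑ m, v m r * (Q2 m s q - ∑ c, ∑ d, Q1 m s c * A c d * b d q)
          * (B r i * B q j * B s k))
        - (∑ s, ∑ r, ∑ q, ∑ m, v m q * (Q2 m s r - ∑ c, ∑ d, Q1 m s c * A c d * b d r)
          * (B r i * B q j * B s k))
        + (∑ s, ∑ r, ∑ q, ∑ m, b s m * V q m r * (B r i * B q j * B s k))
        - (∑ s, ∑ r, ∑ q, ∑ m, b s m * V r m q * (B r i * B q j * B s k)) := by
        simp only [Finset.sum_add_distrib, Finset.sum_sub_distrib]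
    _ = (Cq A B B Q2 i k j - Cq A B A Q1 i k j)
        - (Cq A B B Q2 j k i - Cq A B A Q1 j k i)
        + (Cq B A B Q2 j k i - Cq B A A Q1 j k i)
        - (Cq B A B Q2 i k j - Cq B A A Q1 i k j) := by
        rw [TA_eval A B a b Q1 Q2 v hB hbB hv i j k, hTb,
          TC_eval A B b Q1 Q2 V hbB hb hV i j k, hTd]
    _ = _ := by ring

lemma P_formula (A a : Fin n → Fin n → ℝ) (P Q : Fin n → Fin n → Fin n → ℝ)
    (haA : ∀ s t, (∑ p, a s p * A p t) = if s = t then (1 : ℝ) else 0)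
    (hP : ∀ m x y, (∑ t, (P m x t * a t y + A x t * Q m t y)) = 0) :
    ∀ m x y, P m x y = -∑ t, ∑ c, A x t * Q m t c * A c y := by
  intro m x y
  have h1 : ∀ z, (∑ t, P m x t * a t z) = -∑ t, A x t * Q m t z := by
    intro z
    have h := hP m x z
    rw [Finset.sum_add_distrib] at h
    linarith
  have h3 : (∑ z, (∑ t, P m x t * a t z) * A z y) = P m x y := by
    calc (∑ z, (∑ t, P m x t * a t z) * A z y)
        = ∑ z, ∑ t, P m x t * (a t z * A z y) := by
          refine Finset.sum_congr rfl fun z _ => ?_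
          rw [Finset.sum_mul]
          exact Finset.sum_congr rfl fun t _ => by ring
      _ = ∑ t, ∑ z, P m x t * (a t z * A z y) := Finset.sum_comm
      _ = ∑ t, P m x t * ∑ z, a t z * A z y := by
          refine Finset.sum_congr rfl fun t _ => ?_
          rw [Finset.mul_sum]
      _ = ∑ t, P m x t * (if t = y then (1 : ℝ) else 0) := by
          refine Finset.sum_congr rfl fun t _ => ?_
          rw [haA]
      _ = P m x y := by simp
  have h4 : (∑ z, (∑ t, P m x t * a t z) * A z y)
      = -∑ t, ∑ c, A x t * Q m t c * A c y := by
    calc (∑ z, (∑ t, P m x t * a t z) * A z y)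
        = ∑ z, (-∑ t, A x t * Q m t z) * A z y :=
          Finset.sum_congr rfl fun z _ => by rw [h1]
      _ = -∑ z, ∑ t, A x t * Q m t z * A z y := by
          rw [← Finset.sum_neg_distrib]
          refine Finset.sum_congr rfl fun z _ => ?_
          rw [neg_mul, Finset.sum_mul]
      _ = -∑ t, ∑ z, A x t * Q m t z * A z y := by rw [Finset.sum_comm]
  rw [← h3, h4]

end NijenhuisAux
namespace NijenhuisAux

/-! ### Analytic facts about `pd` -/

lemma pd_congr {N : ℕ} {f g : (Fin N → ℝ) → ℝ} {j : Fin N} {u : Fin N → ℝ}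
    (h : f =ᶠ[nhds u] g) : pd f j u = pd g j u := by
  unfold pd; rw [h.fderiv_eq]

lemma pd_const {N : ℕ} (c : ℝ) (j : Fin N) (u : Fin N → ℝ) : pd (fun _ => c) j u = 0 := by
  unfold pd; simp

lemma pd_sum {N : ℕ} {ι : Type*} (s : Finset ι) (f : ι → (Fin N → ℝ) → ℝ) {u : Fin N → ℝ}
    (h : ∀ i ∈ s, DifferentiableAt ℝ (f i) u) (j : Fin N) :
    pd (fun w => ∑ i ∈ s, f i w) j u = ∑ i ∈ s, pd (f i) j u := by
  unfold pd; rw [fderiv_fun_sum h]; simp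

lemma pd_mul {N : ℕ} {f g : (Fin N → ℝ) → ℝ} {u : Fin N → ℝ}
    (hf : DifferentiableAt ℝ f u) (hg : DifferentiableAt ℝ g u) (j : Fin N) :
    pd (fun w => f w * g w) j u = pd f j u * g u + f u * pd g j u := by
  unfold pd; rw [fderiv_fun_mul hf hg]; simp; ring

lemma diffAt_det {N : ℕ} {M : (Fin N → ℝ) → Matrix (Fin N) (Fin N) ℝ} {u : Fin N → ℝ}
    (h : ∀ i j, DifferentiableAt ℝ (fun w => M w i j) u) :
    DifferentiableAt ℝ (fun w => (M w).det) u := by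
  have heq : (fun w => (M w).det)
      = fun w => ∑ σ : Equiv.Perm (Fin N), ((Equiv.Perm.sign σ : ℤ) : ℝ) * ∏ i, M w (σ i) i := by
    funext w
    rw [Matrix.det_apply]
    exact Finset.sum_congr rfl fun σ _ => by rw [Units.smul_def, zsmul_eq_mul]
  rw [heq]
  refine DifferentiableAt.fun_sum fun σ _ => DifferentiableAt.const_mul ?_ _
  exact (HasFDerivAt.finset_prod (fun i _ => (h (σ i) i).hasFDerivAt)).differentiableAt

lemma diffAt_inv {N : ℕ} {M : (Fin N → ℝ) → Matrix (Fin N) (Fin N) ℝ} {u : Fin N → ℝ}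
    (h : ∀ i j, DifferentiableAt ℝ (fun w => M w i j) u) (hdet : (M u).det ≠ 0)
    (i j : Fin N) : DifferentiableAt ℝ (fun w => (M w)⁻¹ i j) u := by
  have heq : (fun w => (M w)⁻¹ i j)
      = fun w => ((M w).det)⁻¹ * ((M w).updateRow j (Pi.single i 1)).det := by
    funext w
    rw [Matrix.inv_def, Matrix.smul_apply, Matrix.adjugate_apply, Ring.inverse_eq_inv,
      smul_eq_mul]
  rw [heq]
  have hAdj : DifferentiableAt ℝ (fun w => ((M w).updateRow j (Pi.single i 1)).det) u := by
    apply diffAt_det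
    intro p q
    rcases eq_or_ne p j with rfl | hp
    · simp only [Matrix.updateRow_self]
      exact differentiableAt_const _
    · simp only [Matrix.updateRow_ne hp]
      exact h p q
  exact ((diffAt_det h).inv hdet).mul hAdj

end NijenhuisAux
/-- identities relating the contractions of the Nijenhuis tensor of the
affinor `v^i_j = g₁^{is} g_{2,sj}` with the tensor `M^{ijk}`. -/
theorem nijenhuis_mTensor_identities {N : ℕ} (hN : 2 ≤ N)
    (U : Set (Fin N → ℝ)) (hUopen : IsOpen U) (hUne : U.Nonempty)
    (g₁ g₂ : (Fin N → ℝ) → Matrix (Fin N) (Fin N) ℝ)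
    (hg₁ : IsMetricOn U g₁) (hg₂ : IsMetricOn U g₂) :
    ∀ u ∈ U, ∀ i j k,
      (∑ s, ∑ p, ∑ r, ∑ q, (g₁ u)⁻¹ s p * nijenhuis (affinor g₁ g₂) p r q u *
          g₂ u r i * g₂ u q j * g₂ u s k) =
        MTensor g₁ g₂ k j i u + MTensor g₁ g₂ i k j u + MTensor g₁ g₂ i j k u ∧
      2 * (MTensor g₁ g₂ i k j u + MTensor g₁ g₂ i j k u) =
        (∑ s, ∑ p, ∑ r, ∑ q, (g₁ u)⁻¹ s p * nijenhuis (affinor g₁ g₂) p r q u *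
          g₂ u r i * g₂ u q j * g₂ u s k) +
        (∑ s, ∑ p, ∑ r, ∑ q, (g₁ u)⁻¹ s p * nijenhuis (affinor g₁ g₂) p r q u *
          g₂ u r i * g₂ u q k * g₂ u s j) ∧
      2 * MTensor g₁ g₂ k j i u =
        (∑ s, ∑ p, ∑ r, ∑ q, (g₁ u)⁻¹ s p * nijenhuis (affinor g₁ g₂) p r q u *
          g₂ u r i * g₂ u q j * g₂ u s k) -
        (∑ s, ∑ p, ∑ r, ∑ q, (g₁ u)⁻¹ s p * nijenhuis (affinor g₁ g₂) p r q u *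
          g₂ u r i * g₂ u q k * g₂ u s j) := by
  intro u hu i j k
  have hnb : U ∈ nhds u := hUopen.mem_nhds hu
  have hDg1 : ∀ x y, DifferentiableAt ℝ (fun w => g₁ w x y) u := fun x y =>
    ((hg₁.1 x y).differentiableOn (by simp)).differentiableAt hnb
  have hDg2 : ∀ x y, DifferentiableAt ℝ (fun w => g₂ w x y) u := fun x y =>
    ((hg₂.1 x y).differentiableOn (by simp)).differentiableAt hnb
  have hDi1 : ∀ x y, DifferentiableAt ℝ (fun w => (g₁ w)⁻¹ x y) u :=
    NijenhuisAux.diffAt_inv hDg1 (hg₁.2.2 u hu).ne_zero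
  have hDi2 : ∀ x y, DifferentiableAt ℝ (fun w => (g₂ w)⁻¹ x y) u :=
    NijenhuisAux.diffAt_inv hDg2 (hg₂.2.2 u hu).ne_zero
  have haA : ∀ s t, (∑ p, (g₁ u)⁻¹ s p * g₁ u p t) = if s = t then (1 : ℝ) else 0 := by
    intro s t
    rw [← Matrix.mul_apply, Matrix.nonsing_inv_mul _ (hg₁.2.2 u hu), Matrix.one_apply]
  have hbB : ∀ s t, (∑ p, (g₂ u)⁻¹ s p * g₂ u p t) = if s = t then (1 : ℝ) else 0 := by
    intro s t
    rw [← Matrix.mul_apply, Matrix.nonsing_inv_mul _ (hg₂.2.2 u hu), Matrix.one_apply]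
  have hA : ∀ x y, g₁ u x y = g₁ u y x := fun x y => (hg₁.2.1 u hu).apply y x
  have hB : ∀ x y, g₂ u x y = g₂ u y x := fun x y => (hg₂.2.1 u hu).apply y x
  have hinv1symm : ∀ w ∈ U, ∀ x y, (g₁ w)⁻¹ x y = (g₁ w)⁻¹ y x := by
    intro w hw x y
    have hs : ((g₁ w)⁻¹).IsSymm := by
      show Matrix.transpose ((g₁ w)⁻¹) = (g₁ w)⁻¹
      rw [Matrix.transpose_nonsing_inv, (hg₁.2.1 w hw).eq]
    exact hs.apply y x
  have hinv2symm : ∀ w ∈ U, ∀ x y, (g₂ w)⁻¹ x y = (g₂ w)⁻¹ y x := by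
    intro w hw x y
    have hs : ((g₂ w)⁻¹).IsSymm := by
      show Matrix.transpose ((g₂ w)⁻¹) = (g₂ w)⁻¹
      rw [Matrix.transpose_nonsing_inv, (hg₂.2.1 w hw).eq]
    exact hs.apply y x
  have hbsym : ∀ x y, (g₂ u)⁻¹ x y = (g₂ u)⁻¹ y x := hinv2symm u hu
  have hQ1sym : ∀ m x y, pd (fun w => (g₁ w)⁻¹ x y) m u
      = pd (fun w => (g₁ w)⁻¹ y x) m u := by
    intro m x y
    apply NijenhuisAux.pd_congr
    filter_upwards [hnb] with w hw
    exact hinv1symm w hw x y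
  have hQ2sym : ∀ m x y, pd (fun w => (g₂ w)⁻¹ x y) m u
      = pd (fun w => (g₂ w)⁻¹ y x) m u := by
    intro m x y
    apply NijenhuisAux.pd_congr
    filter_upwards [hnb] with w hw
    exact hinv2symm w hw x y
  have hPa : ∀ m x y, (∑ t, (pd (fun w => g₁ w x t) m u * (g₁ u)⁻¹ t y
      + g₁ u x t * pd (fun w => (g₁ w)⁻¹ t y) m u)) = 0 := by
    intro m x y
    have h0 : (fun w => ∑ t, g₁ w x t * (g₁ w)⁻¹ t y) =ᶠ[nhds u]
        (fun _ => if x = y then (1 : ℝ) else 0) := by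
      filter_upwards [hnb] with w hw
      rw [← Matrix.mul_apply, Matrix.mul_nonsing_inv _ (hg₁.2.2 w hw), Matrix.one_apply]
    calc (∑ t, (pd (fun w => g₁ w x t) m u * (g₁ u)⁻¹ t y
          + g₁ u x t * pd (fun w => (g₁ w)⁻¹ t y) m u))
        = ∑ t, pd (fun w => g₁ w x t * (g₁ w)⁻¹ t y) m u :=
          Finset.sum_congr rfl fun t _ =>
            (NijenhuisAux.pd_mul (hDg1 x t) (hDi1 t y) m).symm
      _ = pd (fun w => ∑ t, g₁ w x t * (g₁ w)⁻¹ t y) m u :=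
          (NijenhuisAux.pd_sum _ _ (fun t _ => (hDg1 x t).mul (hDi1 t y)) m).symm
      _ = pd (fun _ => if x = y then (1 : ℝ) else 0) m u := NijenhuisAux.pd_congr h0
      _ = 0 := NijenhuisAux.pd_const _ _ _
  have hP1 : ∀ m x y, pd (fun w => g₁ w x y) m u
      = -∑ t, ∑ c, g₁ u x t * pd (fun w => (g₁ w)⁻¹ t c) m u * g₁ u c y :=
    NijenhuisAux.P_formula (fun p q => g₁ u p q) (fun p q => (g₁ u)⁻¹ p q)
      (fun m p q => pd (fun w => g₁ w p q) m u)
      (fun m p q => pd (fun w => (g₁ w)⁻¹ p q) m u) haA hPa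
  have hv : ∀ x y, affinor g₁ g₂ u x y = ∑ c, g₁ u x c * (g₂ u)⁻¹ c y := by
    intro x y
    show (g₁ u * (g₂ u)⁻¹) x y = _
    rw [Matrix.mul_apply]
  have haff : ∀ m x y, pd (fun w => affinor g₁ g₂ w x y) m u
      = ∑ c, (pd (fun w => g₁ w x c) m u * (g₂ u)⁻¹ c y
          + g₁ u x c * pd (fun w => (g₂ w)⁻¹ c y) m u) := by
    intro m x y
    have hfun : (fun w => affinor g₁ g₂ w x y)
        = fun w => ∑ c, g₁ w x c * (g₂ w)⁻¹ c y := by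
      funext w
      show (g₁ w * (g₂ w)⁻¹) x y = _
      rw [Matrix.mul_apply]
    calc pd (fun w => affinor g₁ g₂ w x y) m u
        = pd (fun w => ∑ c, g₁ w x c * (g₂ w)⁻¹ c y) m u := by rw [hfun]
      _ = ∑ c, pd (fun w => g₁ w x c * (g₂ w)⁻¹ c y) m u :=
          NijenhuisAux.pd_sum _ _ (fun c _ => (hDg1 x c).mul (hDi2 c y)) m
      _ = ∑ c, (pd (fun w => g₁ w x c) m u * (g₂ u)⁻¹ c y
          + g₁ u x c * pd (fun w => (g₂ w)⁻¹ c y) m u) :=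
          Finset.sum_congr rfl fun c _ => NijenhuisAux.pd_mul (hDg1 x c) (hDi2 c y) m
  have hV : ∀ m x y, pd (fun w => affinor g₁ g₂ w x y) m u
      = (∑ c, g₁ u x c * pd (fun w => (g₂ w)⁻¹ c y) m u)
        - ∑ c, ∑ d, ∑ e, g₁ u x c * pd (fun w => (g₁ w)⁻¹ c d) m u * g₁ u d e
            * (g₂ u)⁻¹ e y := by
    intro m x y
    have hfirst : (∑ c, pd (fun w => g₁ w x c) m u * (g₂ u)⁻¹ c y)
        = -∑ c, ∑ d, ∑ e, g₁ u x c * pd (fun w => (g₁ w)⁻¹ c d) m u * g₁ u d e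
            * (g₂ u)⁻¹ e y := by
      calc (∑ c, pd (fun w => g₁ w x c) m u * (g₂ u)⁻¹ c y)
          = ∑ c, (-∑ t, ∑ z, g₁ u x t * pd (fun w => (g₁ w)⁻¹ t z) m u * g₁ u z c)
              * (g₂ u)⁻¹ c y :=
            Finset.sum_congr rfl fun c _ => by rw [hP1 m x c]
        _ = -∑ c, ∑ t, ∑ z, g₁ u x t * pd (fun w => (g₁ w)⁻¹ t z) m u * g₁ u z c
              * (g₂ u)⁻¹ c y := by
            rw [← Finset.sum_neg_distrib]
            refine Finset.sum_congr rfl fun c _ => ?_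
            rw [neg_mul, Finset.sum_mul]
            refine congrArg Neg.neg (Finset.sum_congr rfl fun t _ => ?_)
            rw [Finset.sum_mul]
        _ = -∑ t, ∑ z, ∑ c, g₁ u x t * pd (fun w => (g₁ w)⁻¹ t z) m u * g₁ u z c
              * (g₂ u)⁻¹ c y :=
            congrArg Neg.neg (NijenhuisAux.sum3_perm_231
              (fun c t z => g₁ u x t * pd (fun w => (g₁ w)⁻¹ t z) m u * g₁ u z c
                * (g₂ u)⁻¹ c y))
    rw [haff m x y, Finset.sum_add_distrib, hfirst]
    ring
  have hanti : ∀ x y z, MTensor g₁ g₂ x y z u + MTensor g₁ g₂ y x z u = 0 := by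
    intro x y z
    unfold MTensor
    rw [← Finset.sum_add_distrib]
    exact Finset.sum_eq_zero fun s _ => by ring
  have core : ∀ x y z,
      (∑ s, ∑ p, ∑ r, ∑ q, (g₁ u)⁻¹ s p * nijenhuis (affinor g₁ g₂) p r q u *
          g₂ u r x * g₂ u q y * g₂ u s z)
        = MTensor g₁ g₂ z y x u + MTensor g₁ g₂ x z y u + MTensor g₁ g₂ x y z u := by
    intro x y z
    have e1 := NijenhuisAux.lhs_eq (fun p q => g₁ u p q) (fun p q => g₂ u p q)
      (fun p q => (g₁ u)⁻¹ p q) (fun p q => (g₂ u)⁻¹ p q)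
      (fun m p q => pd (fun w => (g₁ w)⁻¹ p q) m u)
      (fun m p q => pd (fun w => (g₂ w)⁻¹ p q) m u)
      (fun m p q => pd (fun w => affinor g₁ g₂ w p q) m u)
      (fun p q => affinor g₁ g₂ u p q)
      (fun p r q => nijenhuis (affinor g₁ g₂) p r q u)
      hB hbsym haA hbB hv hV (fun p r q => rfl) x y z
    have e2 := NijenhuisAux.rhs_eq (fun p q => g₁ u p q) (fun p q => g₂ u p q)
      (fun m p q => pd (fun w => (g₁ w)⁻¹ p q) m u)
      (fun m p q => pd (fun w => (g₂ w)⁻¹ p q) m u) hA hB hQ1sym hQ2sym x y z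
    have e3 : MTensor g₁ g₂ z y x u + MTensor g₁ g₂ x z y u + MTensor g₁ g₂ x y z u
        = NijenhuisAux.Mform (fun p q => g₁ u p q) (fun p q => g₂ u p q)
            (fun m p q => pd (fun w => (g₁ w)⁻¹ p q) m u)
            (fun m p q => pd (fun w => (g₂ w)⁻¹ p q) m u) z y x
          + NijenhuisAux.Mform (fun p q => g₁ u p q) (fun p q => g₂ u p q)
            (fun m p q => pd (fun w => (g₁ w)⁻¹ p q) m u)
            (fun m p q => pd (fun w => (g₂ w)⁻¹ p q) m u) x z y
          + NijenhuisAux.Mform (fun p q => g₁ u p q) (fun p q => g₂ u p q)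
            (fun m p q => pd (fun w => (g₁ w)⁻¹ p q) m u)
            (fun m p q => pd (fun w => (g₂ w)⁻¹ p q) m u) x y z := rfl
    exact e1.trans (e2.symm.trans e3.symm)
  refine ⟨core i j k, ?_, ?_⟩
  · linarith [core i j k, core i k j, hanti k j i]
  · linarith [core i j k, core i k j, hanti k j i]
end

section
/- Let H_1,…,H_N : U → ℝ be smooth nowhere-zero functions, let f^1,…,f^N : ℝ → ℝ be smooth positive functions of a single variable, and define the rotation coefficients β_{ij}(u) = (1/H_i(u)) ∂H_j/∂u^i for i ≠ j. Then the two diagonal metrics g_2^{ij}(u) = H_i(u)^{−2} δ^{ij} and g_1^{ij}(u) = f^i(u^i) H_i(u)^{−2} δ^{ij} are both flat if and only if the β_{ij} satisfy, on U: (i) ∂β_{ij}/∂u^k = β_{ik} β_{kj} for all pairwise distinct i, j, k; (ii) ∂β_{ij}/∂u^i + ∂β_{ji}/∂u^j + Σ_{s≠i, s≠j} β_{si} β_{sj} = 0 for all i ≠ j; (iii) f^i(u^i) ∂β_{ij}/∂u^i + (1/2)(f^i)'(u^i) β_{ij} + f^j(u^j) ∂β_{ji}/∂u^j + (1/2)(f^j)'(u^j)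 β_{ji} + Σ_{s≠i, s≠j} f^s(u^s) β_{si} β_{sj} = 0 for all i ≠ j. (Equations (i)–(ii) are the Lamé equations; (iii) is a nonlinear differential reduction of them.) -/
open scoped BigOperators

set_option maxHeartbeats 1000000

theorem le_top_WT (n : ℕ∞) : ((n : WithTop ℕ∞)) ≤ ((⊤ : ℕ∞) : WithTop ℕ∞) :=
  WithTop.coe_le_coe.mpr le_top

theorem two_le_WT : (2 : WithTop ℕ∞) ≤ ((⊤ : ℕ∞) : WithTop ℕ∞) := by
  have := le_top_WT 2; simpa using this

theorem one_le_WT : (1 : WithTop ℕ∞) ≤ ((⊤ : ℕ∞) : WithTop ℕ∞) := by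
  have := le_top_WT 1; simpa using this

section Toolbox
variable {N : ℕ} {U : Set (Fin N → ℝ)} {u : Fin N → ℝ} {f g : (Fin N → ℝ) → ℝ} {j : Fin N}

theorem pd_congr_nhds (h : f =ᶠ[nhds u] g) : pd f j u = pd g j u := by
  unfold pd; rw [h.fderiv_eq]

theorem pd_congrOn (hU : IsOpen U) (hu : u ∈ U) (h : ∀ w ∈ U, f w = g w) :
    pd f j u = pd g j u :=
  pd_congr_nhds (Filter.eventuallyEq_of_mem (hU.mem_nhds hu) h)

theorem pd_const (c : ℝ) : pd (fun _ : Fin N → ℝ => c) j u = 0 := by simp [pd]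

theorem pd_add (hf : DifferentiableAt ℝ f u) (hg : DifferentiableAt ℝ g u) :
    pd (fun w => f w + g w) j u = pd f j u + pd g j u := by
  simp [pd, fderiv_fun_add hf hg]

theorem pd_mul (hf : DifferentiableAt ℝ f u) (hg : DifferentiableAt ℝ g u) :
    pd (fun w => f w * g w) j u = pd f j u * g u + f u * pd g j u := by
  simp [pd, fderiv_fun_mul hf hg]; ring

theorem pd_const_mul (hf : DifferentiableAt ℝ f u) (c : ℝ) :
    pd (fun w => c * f w) j u = c * pd f j u := by
  simp [pd, fderiv_const_mul hf c]

theorem pd_neg : pd (fun w => -f w) j u = -pd f j u := by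
  simp [pd, fderiv_neg]

theorem pd_sub (hf : DifferentiableAt ℝ f u) (hg : DifferentiableAt ℝ g u) :
    pd (fun w => f w - g w) j u = pd f j u - pd g j u := by
  simp [pd, fderiv_fun_sub hf hg]

theorem pd_inv (hf : DifferentiableAt ℝ f u) (hne : f u ≠ 0) :
    pd (fun w => (f w)⁻¹) j u = -pd f j u / f u ^ 2 := by
  have h := ((hasDerivAt_inv hne).comp_hasFDerivAt u hf.hasFDerivAt).fderiv
  simp only [Function.comp_def] at h
  rw [pd, h]
  simp [pd]; ring

theorem diffAt_of_cdOn (hU : IsOpen U) (hu : u ∈ U)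
    (hf : ContDiffOn ℝ (⊤ : ℕ∞) f U) : DifferentiableAt ℝ f u :=
  (hf.contDiffAt (hU.mem_nhds hu)).differentiableAt (by simp)

theorem contDiffOn_pd (hU : IsOpen U) (hf : ContDiffOn ℝ (⊤ : ℕ∞) f U) :
    ContDiffOn ℝ (⊤ : ℕ∞) (fun w => pd f j w) U := by
  have h1 : ContDiffOn ℝ (⊤ : ℕ∞) (fderiv ℝ f) U :=
    ((contDiffOn_infty_iff_fderiv_of_isOpen hU).1 hf).2
  exact h1.clm_apply contDiffOn_const

theorem pd_comm (hU : IsOpen U) (hu : u ∈ U) (hf : ContDiffOn ℝ (⊤ : ℕ∞) f U) (a b : Fin N) :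
    pd (fun w => pd f a w) b u = pd (fun w => pd f b w) a u := by
  have hsym : IsSymmSndFDerivAt ℝ f u :=
    (hf.contDiffAt (hU.mem_nhds hu)).isSymmSndFDerivAt (by simpa using two_le_WT)
  have hdf : DifferentiableAt ℝ (fderiv ℝ f) u :=
    ((((contDiffOn_infty_iff_fderiv_of_isOpen hU).1 hf).2).contDiffAt
      (hU.mem_nhds hu)).differentiableAt (by simp)
  have key : ∀ a b : Fin N, pd (fun w => pd f a w) b u
      = fderiv ℝ (fderiv ℝ f) u (Pi.single b 1) (Pi.single a 1) := by
    intro a b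
    have h0 : pd (fun w => pd f a w) b u
        = fderiv ℝ (fun w => (fderiv ℝ f w) ((fun _ => (Pi.single a 1 : Fin N → ℝ)) w)) u (Pi.single b 1) := rfl
    rw [h0, fderiv_clm_apply hdf (differentiableAt_const _)]
    simp
  rw [key a b, key b a, hsym]

end Toolbox

/-- Squared Lamé coefficient. -/
noncomputable def LME {N : ℕ} (K : Fin N → (Fin N → ℝ) → ℝ) (i : Fin N) :
    (Fin N → ℝ) → ℝ := fun w => K i w ^ 2

/-- Closed form of the Christoffel symbols of the diagonal metric. -/
noncomputable def LMGam {N : ℕ} (K : Fin N → (Fin N → ℝ) → ℝ) (i j k : Fin N) :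
    (Fin N → ℝ) → ℝ := fun w =>
  (1/2) * ((LME K i w)⁻¹ *
    ((if i = k then pd (LME K i) j w else 0) + (if j = i then pd (LME K j) k w else 0)
      - (if j = k then pd (LME K j) i w else 0)))

/-- Rotation-coefficient function. -/
noncomputable def LMbet {N : ℕ} (K : Fin N → (Fin N → ℝ) → ℝ) (i j : Fin N) :
    (Fin N → ℝ) → ℝ := fun w => (1 / K i w) * pd (K j) i w

section Diag
variable {N : ℕ} {K : Fin N → (Fin N → ℝ) → ℝ} {U : Set (Fin N → ℝ)}
  {u : Fin N → ℝ}

theorem LMinv_diag (hKne : ∀ i, ∀ u ∈ U, K i u ≠ 0) (hu : u ∈ U) :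
    (Matrix.diagonal (fun i => (K i u ^ 2)⁻¹))⁻¹ = Matrix.diagonal (fun i => K i u ^ 2) := by
  apply Matrix.inv_eq_right_inv
  rw [Matrix.diagonal_mul_diagonal]
  have : (fun i => (K i u ^ 2)⁻¹ * K i u ^ 2) = fun _ => (1:ℝ) := by
    funext i
    exact inv_mul_cancel₀ (pow_ne_zero 2 (hKne i u hu))
  rw [this, Matrix.diagonal_one]

theorem LMinv_entry (hKne : ∀ i, ∀ u ∈ U, K i u ≠ 0) (hu : u ∈ U) (s k : Fin N) :
    (Matrix.diagonal (fun i => (K i u ^ 2)⁻¹))⁻¹ s k = (if s = k then LME K s u else 0) := by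
  rw [LMinv_diag hKne hu, Matrix.diagonal_apply]
  rfl

theorem LMpd_inv_entry (hU : IsOpen U) (hKne : ∀ i, ∀ u ∈ U, K i u ≠ 0) (hu : u ∈ U)
    (s k j : Fin N) :
    pd (fun v => (Matrix.diagonal (fun i => (K i v ^ 2)⁻¹))⁻¹ s k) j u
      = (if s = k then pd (LME K s) j u else 0) := by
  by_cases h : s = k
  · subst h
    simp only [if_pos rfl]
    exact pd_congrOn hU hu (fun w hw => by rw [LMinv_entry hKne hw]; simp)
  · simp only [if_neg h]
    rw [pd_congrOn hU hu (g := fun _ => (0:ℝ)) (fun w hw => by rw [LMinv_entry hKne hw]; simp [h])]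
    exact pd_const 0

theorem LMchristoffel_eq (hU : IsOpen U) (hKne : ∀ i, ∀ u ∈ U, K i u ≠ 0) (hu : u ∈ U)
    (i j k : Fin N) :
    christoffelLow (fun v => Matrix.diagonal (fun i => (K i v ^ 2)⁻¹)) i j k u
      = LMGam K i j k u := by
  unfold christoffelLow
  rw [Finset.sum_eq_single_of_mem i (Finset.mem_univ i)
    (fun b _ hb => by simp [Matrix.diagonal_apply_ne' _ hb])]
  rw [LMpd_inv_entry hU hKne hu i k j, LMpd_inv_entry hU hKne hu j i k,
    LMpd_inv_entry hU hKne hu j k i]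
  simp only [Matrix.diagonal_apply_eq]
  rw [LMGam]
  rfl

theorem LMriemann_eq (hU : IsOpen U) (hKne : ∀ i, ∀ u ∈ U, K i u ≠ 0) (hu : u ∈ U)
    (i j k l : Fin N) :
    riemannLow (fun v => Matrix.diagonal (fun i => (K i v ^ 2)⁻¹)) i j k l u
      = pd (LMGam K i j l) k u - pd (LMGam K i j k) l u
        + ∑ p, LMGam K i p k u * LMGam K p j l u
        - ∑ p, LMGam K i p l u * LMGam K p j k u := by
  unfold riemannLow
  rw [pd_congrOn hU hu (fun w hw => LMchristoffel_eq hU hKne hw i j l),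
    pd_congrOn hU hu (fun w hw => LMchristoffel_eq hU hKne hw i j k)]
  have e1 : ∑ p, christoffelLow (fun v => Matrix.diagonal (fun i => (K i v ^ 2)⁻¹)) i p k u *
      christoffelLow (fun v => Matrix.diagonal (fun i => (K i v ^ 2)⁻¹)) p j l u
      = ∑ p, LMGam K i p k u * LMGam K p j l u :=
    Finset.sum_congr rfl fun p _ => by
      rw [LMchristoffel_eq hU hKne hu, LMchristoffel_eq hU hKne hu]
  have e2 : ∑ p, christoffelLow (fun v => Matrix.diagonal (fun i => (K i v ^ 2)⁻¹)) i p l u *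
      christoffelLow (fun v => Matrix.diagonal (fun i => (K i v ^ 2)⁻¹)) p j k u
      = ∑ p, LMGam K i p l u * LMGam K p j k u :=
    Finset.sum_congr rfl fun p _ => by
      rw [LMchristoffel_eq hU hKne hu, LMchristoffel_eq hU hKne hu]
  rw [e1, e2]

/- shape lemmas for LMGam -/
theorem LMGam_distinct {i j k : Fin N} (h1 : i ≠ k) (h2 : j ≠ i) (h3 : j ≠ k) :
    LMGam K i j k = fun _ => (0:ℝ) := by
  funext w; simp [LMGam, h1, h2, h3]

theorem LMGam_iji {i j : Fin N} (h : j ≠ i) :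
    LMGam K i j i = fun w => (1/2) * ((LME K i w)⁻¹ * pd (LME K i) j w) := by
  funext w; simp [LMGam, h]

theorem LMGam_iik (i k : Fin N) :
    LMGam K i i k = fun w => (1/2) * ((LME K i w)⁻¹ * pd (LME K i) k w) := by
  funext w
  by_cases h : i = k
  · subst h; simp [LMGam]
  · simp [LMGam, h]

theorem LMGam_ijj {i j : Fin N} (h : j ≠ i) :
    LMGam K i j j = fun w => -((1/2) * ((LME K i w)⁻¹ * pd (LME K j) i w)) := by
  funext w; simp [LMGam, h, Ne.symm h]

end Diag

section Comp
variable {N : ℕ} {K : Fin N → (Fin N → ℝ) → ℝ} {U : Set (Fin N → ℝ)} {u : Fin N → ℝ}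

theorem LME_apply (i : Fin N) : LME K i u = K i u ^ 2 := rfl
theorem LMbet_apply (i j : Fin N) : LMbet K i j u = (1 / K i u) * pd (K j) i u := rfl

theorem LME_cdOn (hK : ∀ i, ContDiffOn ℝ (⊤:ℕ∞) (K i) U) (i : Fin N) :
    ContDiffOn ℝ (⊤:ℕ∞) (LME K i) U := by
  have h : LME K i = fun w => K i w * K i w := by funext w; simp [LME, sq]
  rw [h]; exact (hK i).mul (hK i)

theorem diffK (hU : IsOpen U) (hK : ∀ i, ContDiffOn ℝ (⊤:ℕ∞) (K i) U)
    (hKne : ∀ i, ∀ u ∈ U, K i u ≠ 0) (hu : u ∈ U) (i : Fin N) : DifferentiableAt ℝ (K i) u := diffAt_of_cdOn hU hu (hK i)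

theorem diffpdK (hU : IsOpen U) (hK : ∀ i, ContDiffOn ℝ (⊤:ℕ∞) (K i) U)
    (hKne : ∀ i, ∀ u ∈ U, K i u ≠ 0) (hu : u ∈ U) (a b : Fin N) : DifferentiableAt ℝ (fun w => pd (K a) b w) u :=
  diffAt_of_cdOn hU hu (contDiffOn_pd hU (hK a))

theorem diffE (hU : IsOpen U) (hK : ∀ i, ContDiffOn ℝ (⊤:ℕ∞) (K i) U)
    (hKne : ∀ i, ∀ u ∈ U, K i u ≠ 0) (hu : u ∈ U) (a : Fin N) : DifferentiableAt ℝ (LME K a) u :=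
  diffAt_of_cdOn hU hu (LME_cdOn hK a)

theorem diffpdE (hU : IsOpen U) (hK : ∀ i, ContDiffOn ℝ (⊤:ℕ∞) (K i) U)
    (hKne : ∀ i, ∀ u ∈ U, K i u ≠ 0) (hu : u ∈ U) (a c : Fin N) : DifferentiableAt ℝ (fun w => pd (LME K a) c w) u :=
  diffAt_of_cdOn hU hu (contDiffOn_pd hU (LME_cdOn hK a))

theorem LMEne (hU : IsOpen U) (hK : ∀ i, ContDiffOn ℝ (⊤:ℕ∞) (K i) U)
    (hKne : ∀ i, ∀ u ∈ U, K i u ≠ 0) (hu : u ∈ U) (a : Fin N) : LME K a u ≠ 0 := by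
  simpa [LME] using pow_ne_zero 2 (hKne a u hu)

theorem pdE (hU : IsOpen U) (hK : ∀ i, ContDiffOn ℝ (⊤:ℕ∞) (K i) U)
    (hKne : ∀ i, ∀ u ∈ U, K i u ≠ 0) (hu : u ∈ U) (a b : Fin N) : pd (LME K a) b u = 2 * K a u * pd (K a) b u := by
  have h : pd (LME K a) b u = pd (fun w => K a w * K a w) b u := by
    congr 1; funext w; simp [LME, sq]
  rw [h, pd_mul (diffK hU hK hKne hu a) (diffK hU hK hKne hu a)]; ring

theorem pdpdE (hU : IsOpen U) (hK : ∀ i, ContDiffOn ℝ (⊤:ℕ∞) (K i) U)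
    (hKne : ∀ i, ∀ u ∈ U, K i u ≠ 0) (hu : u ∈ U) (a c d : Fin N) :
    pd (fun w => pd (LME K a) c w) d u
      = 2 * (pd (K a) d u * pd (K a) c u + K a u * pd (fun w => pd (K a) c w) d u) := by
  have h1 : pd (fun w => pd (LME K a) c w) d u
      = pd (fun w => 2 * (K a w * pd (K a) c w)) d u :=
    pd_congrOn hU hu (fun w hw => by rw [pdE hU hK hKne hw]; ring)
  rw [h1, pd_const_mul ((diffK hU hK hKne hu a).fun_mul (diffpdK hU hK hKne hu a c)),
    pd_mul (diffK hU hK hKne hu a) (diffpdK hU hK hKne hu a c)]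

theorem pdbet (hU : IsOpen U) (hK : ∀ i, ContDiffOn ℝ (⊤:ℕ∞) (K i) U)
    (hKne : ∀ i, ∀ u ∈ U, K i u ≠ 0) (hu : u ∈ U) (i j k : Fin N) :
    pd (LMbet K i j) k u
      = -pd (K i) k u / K i u ^ 2 * pd (K j) i u
        + (K i u)⁻¹ * pd (fun w => pd (K j) i w) k u := by
  have h : LMbet K i j = fun w => (K i w)⁻¹ * pd (K j) i w := by
    funext w; simp [LMbet, one_div]
  rw [h, pd_mul ((diffK hU hK hKne hu i).fun_inv (hKne i u hu)) (diffpdK hU hK hKne hu j i),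
    pd_inv (diffK hU hK hKne hu i) (hKne i u hu)]

theorem pd_shape (hU : IsOpen U) (hK : ∀ i, ContDiffOn ℝ (⊤:ℕ∞) (K i) U)
    (hKne : ∀ i, ∀ u ∈ U, K i u ≠ 0) (hu : u ∈ U) (a b c d : Fin N) :
    pd (fun w => (1/2) * ((LME K a w)⁻¹ * pd (LME K b) c w)) d u
      = (1/2) * (-pd (LME K a) d u / LME K a u ^ 2 * pd (LME K b) c u
          + (LME K a u)⁻¹ * pd (fun w => pd (LME K b) c w) d u) := by
  rw [pd_const_mul (((diffE hU hK hKne hu a).fun_inv (LMEne hU hK hKne hu a)).fun_mul (diffpdE hU hK hKne hu b c)),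
    pd_mul ((diffE hU hK hKne hu a).fun_inv (LMEne hU hK hKne hu a)) (diffpdE hU hK hKne hu b c),
    pd_inv (diffE hU hK hKne hu a) (LMEne hU hK hKne hu a)]

/- value forms -/
theorem LMGam_val_distinct {i j k : Fin N} (h1 : i ≠ k) (h2 : j ≠ i) (h3 : j ≠ k) :
    LMGam K i j k u = 0 := by
  simp [LMGam, h1, h2, h3]

theorem LMGam_val_iji {i j : Fin N} (h : j ≠ i) :
    LMGam K i j i u = (1/2) * ((LME K i u)⁻¹ * pd (LME K i) j u) := by
  simp [LMGam, h]

theorem LMGam_val_iik (i k : Fin N) :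
    LMGam K i i k u = (1/2) * ((LME K i u)⁻¹ * pd (LME K i) k u) := by
  by_cases h : i = k
  · subst h; simp [LMGam]
  · simp [LMGam, h]

theorem LMGam_val_ijj {i j : Fin N} (h : j ≠ i) :
    LMGam K i j j u = -((1/2) * ((LME K i u)⁻¹ * pd (LME K j) i u)) := by
  simp [LMGam, h, Ne.symm h]

theorem sum_split₂ {i j : Fin N} (hij : i ≠ j) (F : Fin N → ℝ) :
    ∑ p, F p = F i + F j + ∑ p ∈ Finset.univ.filter (fun p => p ≠ i ∧ p ≠ j), F p := by
  classical
  have h : (Finset.univ : Finset (Fin N))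
      = insert i (insert j (Finset.univ.filter (fun p => p ≠ i ∧ p ≠ j))) := by
    ext p
    by_cases hpi : p = i <;> by_cases hpj : p = j <;> simp [hpi, hpj]
  conv_lhs => rw [h]
  rw [Finset.sum_insert (by simp [hij]), Finset.sum_insert (by simp)]
  ring

theorem LMGamprod_symm (i p k l : Fin N) (w : Fin N → ℝ) :
    LMGam K i p k w * LMGam K p i l w = LMGam K i p l w * LMGam K p i k w := by
  by_cases h1 : i = p <;> by_cases h2 : i = k <;> by_cases h3 : i = l <;>
    by_cases h4 : p = k <;> by_cases h5 : p = l <;> by_cases h6 : k = l <;>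
    simp_all [LMGam] <;> (try ring) <;> (try (split_ifs <;> try simp_all)) <;> (try ring) <;> (try (intro h; simp_all))

end Comp

section RComp
variable {N : ℕ} {K : Fin N → (Fin N → ℝ) → ℝ} {U : Set (Fin N → ℝ)} {u : Fin N → ℝ}

theorem LMriemann_kk (g : (Fin N → ℝ) → Matrix (Fin N) (Fin N) ℝ) (i j k : Fin N)
    (u : Fin N → ℝ) : riemannLow g i j k k u = 0 := by
  rw [riemannLow]; ring

theorem LMriemann_anti (g : (Fin N → ℝ) → Matrix (Fin N) (Fin N) ℝ) (i j k l : Fin N)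
    (u : Fin N → ℝ) : riemannLow g i j k l u = -riemannLow g i j l k u := by
  rw [riemannLow, riemannLow]; ring

variable (hU : IsOpen U) (hK : ∀ i, ContDiffOn ℝ (⊤:ℕ∞) (K i) U)
  (hKne : ∀ i, ∀ u ∈ U, K i u ≠ 0) (hu : u ∈ U)

include hU hK hKne hu

theorem LMR_distinct {i j k l : Fin N} (hij : i ≠ j) (hik : i ≠ k) (hil : i ≠ l)
    (hjk : j ≠ k) (hjl : j ≠ l) (hkl : k ≠ l) :
    riemannLow (fun v => Matrix.diagonal (fun i => (K i v ^ 2)⁻¹)) i j k l u = 0 := by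
  rw [LMriemann_eq hU hKne hu]
  rw [LMGam_distinct hil (Ne.symm hij) hjl, LMGam_distinct hik (Ne.symm hij) hjk,
    pd_const, pd_const]
  have hs1 : ∑ p, LMGam K i p k u * LMGam K p j l u = 0 :=
    Finset.sum_eq_zero fun p _ => by
      by_cases hpi : p = i
      · subst hpi; rw [LMGam_val_distinct hil (Ne.symm hij) hjl, mul_zero]
      · by_cases hpk : p = k
        · subst hpk; rw [LMGam_val_distinct hkl hjk hjl, mul_zero]
        · rw [LMGam_val_distinct hik hpi hpk, zero_mul]
  have hs2 : ∑ p, LMGam K i p l u * LMGam K p j k u = 0 :=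
    Finset.sum_eq_zero fun p _ => by
      by_cases hpi : p = i
      · subst hpi; rw [LMGam_val_distinct hik (Ne.symm hij) hjk, mul_zero]
      · by_cases hpl : p = l
        · subst hpl; rw [LMGam_val_distinct (Ne.symm hkl) hjl hjk, mul_zero]
        · rw [LMGam_val_distinct hil hpi hpl, zero_mul]
  rw [hs1, hs2]; ring

theorem LMR_iikl (i k l : Fin N) :
    riemannLow (fun v => Matrix.diagonal (fun i => (K i v ^ 2)⁻¹)) i i k l u = 0 := by
  rw [LMriemann_eq hU hKne hu]
  rw [LMGam_iik (K := K) i l, LMGam_iik (K := K) i k]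
  rw [pd_shape hU hK hKne hu i i l k, pd_shape hU hK hKne hu i i k l]
  rw [Finset.sum_congr rfl (fun p _ => LMGamprod_symm i p k l u)]
  rw [pd_comm hU hu (LME_cdOn hK i) l k]
  ring

theorem LMR_ijil {i j l : Fin N} (hij : i ≠ j) (hil : i ≠ l) (hjl : j ≠ l) :
    riemannLow (fun v => Matrix.diagonal (fun i => (K i v ^ 2)⁻¹)) i j i l u
      = -(K j u / K i u) * (pd (LMbet K j i) l u - LMbet K j l u * LMbet K l i u) := by
  rw [LMriemann_eq hU hKne hu]
  rw [LMGam_distinct hil (Ne.symm hij) hjl, pd_const]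
  rw [LMGam_iji (Ne.symm hij), pd_shape hU hK hKne hu i i j l]
  rw [sum_split₂ hjl (fun p => LMGam K i p i u * LMGam K p j l u)]
  have hz1 : ∑ p ∈ Finset.univ.filter (fun p => p ≠ j ∧ p ≠ l),
      LMGam K i p i u * LMGam K p j l u = 0 :=
    Finset.sum_eq_zero fun p hp => by
      have hp' := Finset.mem_filter.mp hp
      rw [LMGam_val_distinct hp'.2.2 (Ne.symm hp'.2.1) hjl, mul_zero]
  rw [hz1]
  rw [LMGam_val_iji (Ne.symm hij), LMGam_val_iik j l, LMGam_val_iji (Ne.symm hil),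
    LMGam_val_iji hjl]
  rw [sum_split₂ hil (fun p => LMGam K i p l u * LMGam K p j i u)]
  have hz2 : ∑ p ∈ Finset.univ.filter (fun p => p ≠ i ∧ p ≠ l),
      LMGam K i p l u * LMGam K p j i u = 0 :=
    Finset.sum_eq_zero fun p hp => by
      have hp' := Finset.mem_filter.mp hp
      rw [LMGam_val_distinct hil hp'.2.1 hp'.2.2, zero_mul]
  rw [hz2]
  rw [LMGam_val_iik i l, LMGam_val_iji (Ne.symm hij)]
  rw [LMGam_val_ijj (Ne.symm hil), LMGam_val_distinct (Ne.symm hil) hjl (Ne.symm hij), mul_zero]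
  rw [pdbet hU hK hKne hu j i l]
  simp only [pdpdE hU hK hKne hu, pdE hU hK hKne hu, LMbet_apply, LME_apply]
  have ha := hKne i u hu
  have hb := hKne j u hu
  have hc := hKne l u hu
  generalize pd (fun w => pd (K i) j w) l u = S at *
  generalize pd (K i) j u = dij at *
  generalize pd (K i) l u = dil at *
  generalize pd (K j) l u = djl at *
  generalize pd (K l) j u = dlj at *
  generalize hA : K i u = a at *
  generalize hB : K j u = b at *
  generalize hC : K l u = c at *
  field_simp
  ring

theorem LMR_ijjl {i j l : Fin N} (hij : i ≠ j) (hil : i ≠ l) (hjl : j ≠ l) :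
    riemannLow (fun v => Matrix.diagonal (fun i => (K i v ^ 2)⁻¹)) i j j l u
      = (K j u / K i u) * (pd (LMbet K i j) l u - LMbet K i l u * LMbet K l j u) := by
  rw [LMriemann_eq hU hKne hu]
  rw [LMGam_distinct hil (Ne.symm hij) hjl, pd_const]
  rw [LMGam_ijj (Ne.symm hij), pd_neg, pd_shape hU hK hKne hu i j i l]
  rw [sum_split₂ hij (fun p => LMGam K i p j u * LMGam K p j l u)]
  have hz1 : ∑ p ∈ Finset.univ.filter (fun p => p ≠ i ∧ p ≠ j),
      LMGam K i p j u * LMGam K p j l u = 0 :=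
    Finset.sum_eq_zero fun p hp => by
      have hp' := Finset.mem_filter.mp hp
      rw [LMGam_val_distinct hij hp'.2.1 hp'.2.2, zero_mul]
  rw [hz1]
  rw [LMGam_val_iik i j, LMGam_val_distinct hil (Ne.symm hij) hjl, mul_zero]
  rw [LMGam_val_ijj (Ne.symm hij), LMGam_val_iik j l]
  rw [sum_split₂ hil (fun p => LMGam K i p l u * LMGam K p j j u)]
  have hz2 : ∑ p ∈ Finset.univ.filter (fun p => p ≠ i ∧ p ≠ l),
      LMGam K i p l u * LMGam K p j j u = 0 :=
    Finset.sum_eq_zero fun p hp => by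
      have hp' := Finset.mem_filter.mp hp
      rw [LMGam_val_distinct hil hp'.2.1 hp'.2.2, zero_mul]
  rw [hz2]
  rw [LMGam_val_iik i l, LMGam_val_ijj (Ne.symm hij)]
  rw [LMGam_val_ijj (Ne.symm hil), LMGam_val_ijj hjl]
  rw [pdbet hU hK hKne hu i j l]
  simp only [pdpdE hU hK hKne hu, pdE hU hK hKne hu, LMbet_apply, LME_apply]
  have ha := hKne i u hu
  have hb := hKne j u hu
  have hc := hKne l u hu
  generalize pd (fun w => pd (K j) i w) l u = S at *
  generalize pd (K j) i u = dji at *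
  generalize pd (K j) l u = djl at *
  generalize pd (K i) l u = dil at *
  generalize pd (K l) i u = dli at *
  generalize hA : K i u = a at *
  generalize hB : K j u = b at *
  generalize hC : K l u = c at *
  field_simp
  ring

theorem LMR_ijij {i j : Fin N} (hij : i ≠ j) :
    riemannLow (fun v => Matrix.diagonal (fun i => (K i v ^ 2)⁻¹)) i j i j u
      = -(K j u / K i u) * (pd (LMbet K i j) i u + pd (LMbet K j i) j u
          + ∑ s ∈ Finset.univ.filter (fun s => s ≠ i ∧ s ≠ j),
              LMbet K s i u * LMbet K s j u) := by
  rw [LMriemann_eq hU hKne hu]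
  rw [LMGam_ijj (Ne.symm hij), pd_neg, pd_shape hU hK hKne hu i j i i]
  rw [LMGam_iji (Ne.symm hij), pd_shape hU hK hKne hu i i j j]
  rw [sum_split₂ hij (fun p => LMGam K i p i u * LMGam K p j j u)]
  rw [LMGam_val_iik i i, LMGam_val_ijj (Ne.symm hij)]
  rw [LMGam_val_iji (Ne.symm hij), LMGam_val_iik j j]
  have hs : ∑ p ∈ Finset.univ.filter (fun p => p ≠ i ∧ p ≠ j),
      LMGam K i p i u * LMGam K p j j u
      = ∑ p ∈ Finset.univ.filter (fun p => p ≠ i ∧ p ≠ j),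
          -(K j u / K i u) * (LMbet K p i u * LMbet K p j u) :=
    Finset.sum_congr rfl fun p hp => by
      have hp' := Finset.mem_filter.mp hp
      rw [LMGam_val_iji hp'.2.1, LMGam_val_ijj (Ne.symm hp'.2.2)]
      simp only [LMbet_apply, LME_apply, pdE hU hK hKne hu]
      field_simp [hKne i u hu, hKne j u hu, hKne p u hu]
  rw [hs, ← Finset.mul_sum]
  rw [sum_split₂ hij (fun p => LMGam K i p j u * LMGam K p j i u)]
  have hz2 : ∑ p ∈ Finset.univ.filter (fun p => p ≠ i ∧ p ≠ j),
      LMGam K i p j u * LMGam K p j i u = 0 :=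
    Finset.sum_eq_zero fun p hp => by
      have hp' := Finset.mem_filter.mp hp
      rw [LMGam_val_distinct hij hp'.2.1 hp'.2.2, zero_mul]
  rw [hz2]
  rw [LMGam_val_iik i j, LMGam_val_iji (Ne.symm hij)]
  rw [LMGam_val_ijj (Ne.symm hij), LMGam_val_iik j i]
  rw [pdbet hU hK hKne hu i j i, pdbet hU hK hKne hu j i j]
  generalize hT : ∑ p ∈ Finset.univ.filter (fun p => p ≠ i ∧ p ≠ j),
      LMbet K p i u * LMbet K p j u = T
  simp only [pdpdE hU hK hKne hu, pdE hU hK hKne hu, LMbet_apply, LME_apply]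
  have ha := hKne i u hu
  have hb := hKne j u hu
  generalize pd (fun w => pd (K j) i w) i u = S1 at *
  generalize pd (fun w => pd (K i) j w) j u = S2 at *
  generalize pd (K i) i u = dii at *
  generalize pd (K i) j u = dij at *
  generalize pd (K j) i u = dji at *
  generalize pd (K j) j u = djj at *
  generalize hA : K i u = a at *
  generalize hB : K j u = b at *
  field_simp
  ring

end RComp

section Core
variable {N : ℕ} {K : Fin N → (Fin N → ℝ) → ℝ} {U : Set (Fin N → ℝ)}

theorem LMflat_diag_iff (hU : IsOpen U) (hK : ∀ i, ContDiffOn ℝ (⊤:ℕ∞) (K i) U)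
    (hKne : ∀ i, ∀ u ∈ U, K i u ≠ 0) :
    IsFlatOn U (fun v => Matrix.diagonal (fun i => (K i v ^ 2)⁻¹)) ↔
      ((∀ u ∈ U, ∀ i j k : Fin N, i ≠ j → i ≠ k → j ≠ k →
          pd (LMbet K i j) k u = LMbet K i k u * LMbet K k j u) ∧
       (∀ u ∈ U, ∀ i j : Fin N, i ≠ j →
          pd (LMbet K i j) i u + pd (LMbet K j i) j u
            + ∑ s ∈ Finset.univ.filter (fun s => s ≠ i ∧ s ≠ j),
                LMbet K s i u * LMbet K s j u = 0)) := by
  constructor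
  · intro hflat
    constructor
    · intro u hu i j k hij hik hjk
      have h := hflat u hu i j j k
      rw [LMR_ijjl hU hK hKne hu hij hik hjk] at h
      have hne : K j u / K i u ≠ 0 := div_ne_zero (hKne j u hu) (hKne i u hu)
      have := (mul_eq_zero.mp h).resolve_left hne
      linarith [this]
    · intro u hu i j hij
      have h := hflat u hu i j i j
      rw [LMR_ijij hU hK hKne hu hij] at h
      have hne : -(K j u / K i u) ≠ 0 :=
        neg_ne_zero.mpr (div_ne_zero (hKne j u hu) (hKne i u hu))
      exact (mul_eq_zero.mp h).resolve_left hne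
  · rintro ⟨h1, h2⟩ u hu i j k l
    by_cases hkl : k = l
    · subst hkl; exact LMriemann_kk _ i j k u
    by_cases hij : i = j
    · subst hij; exact LMR_iikl hU hK hKne hu i k l
    by_cases hik : i = k
    · subst hik
      by_cases hjl : j = l
      · subst hjl
        rw [LMR_ijij hU hK hKne hu hij, h2 u hu i j hij, mul_zero]
      · rw [LMR_ijil hU hK hKne hu hij hkl hjl,
          h1 u hu j i l (Ne.symm hij) hjl (fun h => hkl (h ▸ rfl))]
        ring
    by_cases hil : i = l
    · subst hil
      rw [show riemannLow (fun v => Matrix.diagonal (fun i => (K i v ^ 2)⁻¹)) i j k i u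
          = -riemannLow (fun v => Matrix.diagonal (fun i => (K i v ^ 2)⁻¹)) i j i k u from
          LMriemann_anti _ i j k i u]
      by_cases hjk : j = k
      · subst hjk
        rw [LMR_ijij hU hK hKne hu hij, h2 u hu i j hij, mul_zero, neg_zero]
      · rw [LMR_ijil hU hK hKne hu hij (Ne.symm hkl) hjk,
          h1 u hu j i k (Ne.symm hij) hjk (Ne.symm hkl)]
        ring
    by_cases hjk : j = k
    · subst hjk
      rw [LMR_ijjl hU hK hKne hu hij hil hkl, h1 u hu i j l hij hil hkl]
      ring
    by_cases hjl : j = l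
    · subst hjl
      rw [show riemannLow (fun v => Matrix.diagonal (fun i => (K i v ^ 2)⁻¹)) i j k j u
          = -riemannLow (fun v => Matrix.diagonal (fun i => (K i v ^ 2)⁻¹)) i j j k u from
          LMriemann_anti _ i j k j u]
      rw [LMR_ijjl hU hK hKne hu hij hik hjk, h1 u hu i j k hij hik hjk]
      ring
    · exact LMR_distinct hU hK hKne hu hij hik hil hjk hjl hkl

end Core

theorem pd_comp_proj {N : ℕ} (φ : ℝ → ℝ) (a b : Fin N) (u : Fin N → ℝ)
    (hφ : DifferentiableAt ℝ φ (u a)) :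
    pd (fun w => φ (w a)) b u = if a = b then deriv φ (u a) else 0 := by
  have h := (hφ.hasDerivAt.comp_hasFDerivAt u
    (((ContinuousLinearMap.proj a : (Fin N → ℝ) →L[ℝ] ℝ).hasFDerivAt :
      HasFDerivAt (fun w : Fin N → ℝ => w a) _ u))).fderiv
  rw [pd, show fderiv ℝ (fun w : Fin N → ℝ => φ (w a)) u
      = deriv φ (u a) • (ContinuousLinearMap.proj a : (Fin N → ℝ) →L[ℝ] ℝ) from h]
  by_cases hab : a = b <;> simp [Pi.single_apply, hab]

theorem LMbet_cdOn {N : ℕ} {K : Fin N → (Fin N → ℝ) → ℝ} {U : Set (Fin N → ℝ)}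
    (hU : IsOpen U) (hK : ∀ i, ContDiffOn ℝ (⊤:ℕ∞) (K i) U)
    (hKne : ∀ i, ∀ u ∈ U, K i u ≠ 0) (i j : Fin N) :
    ContDiffOn ℝ (⊤:ℕ∞) (LMbet K i j) U := by
  have h : LMbet K i j = fun w => (K i w)⁻¹ * pd (K j) i w := by
    funext w; simp [LMbet, one_div]
  rw [h]
  exact ((hK i).inv (fun w hw => hKne i w hw)).mul (contDiffOn_pd hU (hK j))

noncomputable def LMsf {N : ℕ} (f : Fin N → ℝ → ℝ) (i : Fin N) : (Fin N → ℝ) → ℝ :=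
  fun w => Real.sqrt (f i (w i))

noncomputable def LMK2 {N : ℕ} (H : Fin N → (Fin N → ℝ) → ℝ) (f : Fin N → ℝ → ℝ)
    (i : Fin N) : (Fin N → ℝ) → ℝ := fun w => H i w / LMsf f i w

section Scale
variable {N : ℕ} {H : Fin N → (Fin N → ℝ) → ℝ} {f : Fin N → ℝ → ℝ}
  {U : Set (Fin N → ℝ)} {u : Fin N → ℝ}

theorem sf_pos (hfpos : ∀ i t, 0 < f i t) (i : Fin N) (w : Fin N → ℝ) : 0 < LMsf f i w :=
  Real.sqrt_pos.mpr (hfpos i (w i))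

theorem sf_contDiff (hf : ∀ i, ContDiff ℝ (⊤:ℕ∞) (f i)) (hfpos : ∀ i t, 0 < f i t)
    (i : Fin N) : ContDiff ℝ (⊤:ℕ∞) (LMsf f i) := by
  rw [contDiff_iff_contDiffAt]
  intro w
  have h1 : ContDiffAt ℝ (⊤:ℕ∞) (fun w : Fin N → ℝ => f i (w i)) w :=
    ((hf i).comp ((ContinuousLinearMap.proj i : (Fin N → ℝ) →L[ℝ] ℝ).contDiff)).contDiffAt
  exact (Real.contDiffAt_sqrt (hfpos i (w i)).ne').comp w h1

theorem sf_diffAt (hf : ∀ i, ContDiff ℝ (⊤:ℕ∞) (f i)) (hfpos : ∀ i t, 0 < f i t)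
    (i : Fin N) (w : Fin N → ℝ) : DifferentiableAt ℝ (LMsf f i) w :=
  ((sf_contDiff hf hfpos i).differentiable (by simp)).differentiableAt

theorem sf_pd (hf : ∀ i, ContDiff ℝ (⊤:ℕ∞) (f i)) (hfpos : ∀ i t, 0 < f i t)
    (i b : Fin N) (u : Fin N → ℝ) :
    pd (LMsf f i) b u = if i = b then deriv (f i) (u i) / (2 * LMsf f i u) else 0 := by
  have hd : DifferentiableAt ℝ (f i) (u i) :=
    ((hf i).differentiable (by simp)).differentiableAt
  have hs : DifferentiableAt ℝ (fun t => Real.sqrt (f i t)) (u i) :=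
    hd.sqrt (hfpos i (u i)).ne'
  rw [show LMsf f i = fun w => (fun t => Real.sqrt (f i t)) (w i) from rfl,
    pd_comp_proj _ i b u hs, deriv_sqrt hd (hfpos i (u i)).ne']
  try rfl

variable (hU : IsOpen U) (hH : ∀ i, ContDiffOn ℝ (⊤:ℕ∞) (H i) U)
  (hHne : ∀ i, ∀ u ∈ U, H i u ≠ 0)
  (hf : ∀ i, ContDiff ℝ (⊤:ℕ∞) (f i)) (hfpos : ∀ i t, 0 < f i t)

include hU hH hHne hf hfpos

theorem K2_cdOn (i : Fin N) : ContDiffOn ℝ (⊤:ℕ∞) (LMK2 H f i) U := by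
  have h := (hH i).div ((sf_contDiff hf hfpos i).contDiffOn)
    (fun w _ => (sf_pos hfpos i w).ne')
  exact h

theorem K2_ne : ∀ i, ∀ w ∈ U, LMK2 H f i w ≠ 0 := fun i w hw =>
  div_ne_zero (hHne i w hw) (sf_pos hfpos i w).ne'

theorem K2_pd {w : Fin N → ℝ} (hw : w ∈ U) (j b : Fin N) :
    pd (LMK2 H f j) b w
      = pd (H j) b w * (LMsf f j w)⁻¹
        + H j w * (-pd (LMsf f j) b w / LMsf f j w ^ 2) := by
  have h : LMK2 H f j = fun w => H j w * (LMsf f j w)⁻¹ := by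
    funext v; simp [LMK2, div_eq_mul_inv]
  rw [h, pd_mul (diffAt_of_cdOn hU hw (hH j))
      ((sf_diffAt hf hfpos j w).fun_inv (sf_pos hfpos j w).ne'),
    pd_inv (sf_diffAt hf hfpos j w) (sf_pos hfpos j w).ne']

theorem bet2_eq {i j : Fin N} (hij : i ≠ j) :
    ∀ w ∈ U, LMbet (LMK2 H f) i j w = LMsf f i w / LMsf f j w * LMbet H i j w := by
  intro w hw
  rw [show LMbet (LMK2 H f) i j w = (1 / LMK2 H f i w) * pd (LMK2 H f j) i w from rfl,
    K2_pd hU hH hHne hf hfpos hw j i, sf_pd hf hfpos j i w, if_neg (Ne.symm hij),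
    show LMbet H i j w = (1 / H i w) * pd (H j) i w from rfl,
    show LMK2 H f i w = H i w / LMsf f i w from rfl]
  simp only [neg_zero, zero_div, mul_zero, add_zero]
  field_simp

theorem bet2_pd_other {i j k : Fin N} (hij : i ≠ j) (hu : u ∈ U)
    (hki : k ≠ i) (hkj : k ≠ j) :
    pd (LMbet (LMK2 H f) i j) k u
      = LMsf f i u / LMsf f j u * pd (LMbet H i j) k u := by
  have h1 : pd (LMbet (LMK2 H f) i j) k u
      = pd (fun w => LMsf f i w * (LMsf f j w)⁻¹ * LMbet H i j w) k u :=
    pd_congrOn hU hu (fun w hw => by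
      rw [bet2_eq hU hH hHne hf hfpos hij w hw, div_eq_mul_inv])
  have dsfi := sf_diffAt hf hfpos i u
  have dsfj := (sf_diffAt hf hfpos j u).fun_inv (sf_pos hfpos j u).ne'
  have dbet := diffAt_of_cdOn hU hu (LMbet_cdOn hU hH hHne i j)
  rw [h1, pd_mul (dsfi.fun_mul dsfj) dbet, pd_mul dsfi dsfj,
    pd_inv (sf_diffAt hf hfpos j u) (sf_pos hfpos j u).ne',
    sf_pd hf hfpos i k u, sf_pd hf hfpos j k u,
    if_neg (Ne.symm hki), if_neg (Ne.symm hkj)]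
  simp only [neg_zero, zero_div, zero_mul, mul_zero, add_zero, zero_add]
  try rw [div_eq_mul_inv]
  try ring

theorem bet2_pd_self {i j : Fin N} (hij : i ≠ j) (hu : u ∈ U) :
    pd (LMbet (LMK2 H f) i j) i u
      = deriv (f i) (u i) / (2 * LMsf f i u) * (LMsf f j u)⁻¹ * LMbet H i j u
        + LMsf f i u * (LMsf f j u)⁻¹ * pd (LMbet H i j) i u := by
  have h1 : pd (LMbet (LMK2 H f) i j) i u
      = pd (fun w => LMsf f i w * (LMsf f j w)⁻¹ * LMbet H i j w) i u :=
    pd_congrOn hU hu (fun w hw => by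
      rw [bet2_eq hU hH hHne hf hfpos hij w hw, div_eq_mul_inv])
  have dsfi := sf_diffAt hf hfpos i u
  have dsfj := (sf_diffAt hf hfpos j u).fun_inv (sf_pos hfpos j u).ne'
  have dbet := diffAt_of_cdOn hU hu (LMbet_cdOn hU hH hHne i j)
  rw [h1, pd_mul (dsfi.fun_mul dsfj) dbet, pd_mul dsfi dsfj,
    pd_inv (sf_diffAt hf hfpos j u) (sf_pos hfpos j u).ne',
    sf_pd hf hfpos i i u, sf_pd hf hfpos j i u,
    if_pos rfl, if_neg (Ne.symm hij)]
  simp only [neg_zero, zero_div, mul_zero, add_zero]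
  try ring

theorem LMQ1 (hu : u ∈ U) {i j k : Fin N} (hij : i ≠ j) (hik : i ≠ k) (hjk : j ≠ k) :
    (pd (LMbet (LMK2 H f) i j) k u
        = LMbet (LMK2 H f) i k u * LMbet (LMK2 H f) k j u)
      ↔ (pd (LMbet H i j) k u = LMbet H i k u * LMbet H k j u) := by
  rw [bet2_pd_other hU hH hHne hf hfpos hij hu (Ne.symm hik) (Ne.symm hjk),
    bet2_eq hU hH hHne hf hfpos hik u hu,
    bet2_eq hU hH hHne hf hfpos (Ne.symm hjk) u hu]
  have key : LMsf f i u / LMsf f k u * LMbet H i k u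
        * (LMsf f k u / LMsf f j u * LMbet H k j u)
      = LMsf f i u / LMsf f j u * (LMbet H i k u * LMbet H k j u) := by
    field_simp [(sf_pos hfpos i u).ne', (sf_pos hfpos j u).ne', (sf_pos hfpos k u).ne']
  rw [key, mul_right_inj' (div_ne_zero (sf_pos hfpos i u).ne' (sf_pos hfpos j u).ne')]

theorem LMQ2 (hu : u ∈ U) {i j : Fin N} (hij : i ≠ j) :
    (pd (LMbet (LMK2 H f) i j) i u + pd (LMbet (LMK2 H f) j i) j u
        + ∑ s ∈ Finset.univ.filter (fun s => s ≠ i ∧ s ≠ j),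
            LMbet (LMK2 H f) s i u * LMbet (LMK2 H f) s j u = 0)
      ↔ (f i (u i) * pd (LMbet H i j) i u + (1/2) * deriv (f i) (u i) * LMbet H i j u
          + f j (u j) * pd (LMbet H j i) j u + (1/2) * deriv (f j) (u j) * LMbet H j i u
          + ∑ s ∈ Finset.univ.filter (fun s => s ≠ i ∧ s ≠ j),
              f s (u s) * LMbet H s i u * LMbet H s j u = 0) := by
  have hsum : ∑ s ∈ Finset.univ.filter (fun s => s ≠ i ∧ s ≠ j),
        LMbet (LMK2 H f) s i u * LMbet (LMK2 H f) s j u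
      = (LMsf f i u * LMsf f j u)⁻¹
        * ∑ s ∈ Finset.univ.filter (fun s => s ≠ i ∧ s ≠ j),
            f s (u s) * LMbet H s i u * LMbet H s j u := by
    rw [Finset.mul_sum]
    refine Finset.sum_congr rfl fun p hp => ?_
    have hp' := Finset.mem_filter.mp hp
    rw [bet2_eq hU hH hHne hf hfpos hp'.2.1 u hu,
      bet2_eq hU hH hHne hf hfpos hp'.2.2 u hu]
    have hsp : LMsf f p u * LMsf f p u = f p (u p) :=
      Real.mul_self_sqrt (hfpos p (u p)).le
    rw [← hsp]
    field_simp [(sf_pos hfpos i u).ne', (sf_pos hfpos j u).ne', (sf_pos hfpos p u).ne']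
  have key : pd (LMbet (LMK2 H f) i j) i u + pd (LMbet (LMK2 H f) j i) j u
        + ∑ s ∈ Finset.univ.filter (fun s => s ≠ i ∧ s ≠ j),
            LMbet (LMK2 H f) s i u * LMbet (LMK2 H f) s j u
      = (LMsf f i u * LMsf f j u)⁻¹
        * (f i (u i) * pd (LMbet H i j) i u + (1/2) * deriv (f i) (u i) * LMbet H i j u
            + f j (u j) * pd (LMbet H j i) j u + (1/2) * deriv (f j) (u j) * LMbet H j i u
            + ∑ s ∈ Finset.univ.filter (fun s => s ≠ i ∧ s ≠ j),
                f s (u s) * LMbet H s i u * LMbet H s j u) := by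
    rw [bet2_pd_self hU hH hHne hf hfpos hij hu,
      bet2_pd_self hU hH hHne hf hfpos (Ne.symm hij) hu, hsum]
    have hfi : f i (u i) = LMsf f i u * LMsf f i u :=
      (Real.mul_self_sqrt (hfpos i (u i)).le).symm
    have hfj : f j (u j) = LMsf f j u * LMsf f j u :=
      (Real.mul_self_sqrt (hfpos j (u j)).le).symm
    rw [hfi, hfj]
    have ha := (sf_pos hfpos i u).ne'
    have hb := (sf_pos hfpos j u).ne'
    generalize hA : LMsf f i u = a
    generalize hB : LMsf f j u = b
    rw [hA] at ha
    rw [hB] at hb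
    field_simp
    ring
  rw [key]
  constructor
  · intro h
    rcases mul_eq_zero.mp h with h' | h'
    · exact absurd h' (inv_ne_zero (mul_ne_zero (sf_pos hfpos i u).ne' (sf_pos hfpos j u).ne'))
    · exact h'
  · intro h; rw [h, mul_zero]

end Scale

/-- the diagonal metrics `g₂^{ij} = H_i⁻² δ^{ij}` and
`g₁^{ij} = f^i(u^i) H_i⁻² δ^{ij}` are both flat iff the rotation coefficients
`β_{ij} = (1/H_i) ∂H_j/∂u^i` satisfy the Lamé equations together with the nonlinear
differential reduction. -/
theorem flat_pair_iff_lame_with_reduction {N : ℕ} (hN : 2 ≤ N)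
    (U : Set (Fin N → ℝ)) (hUopen : IsOpen U) (hUne : U.Nonempty)
    (H : Fin N → (Fin N → ℝ) → ℝ) (hH : ∀ i, ContDiffOn ℝ (⊤ : ℕ∞) (H i) U)
    (hHne : ∀ i, ∀ u ∈ U, H i u ≠ 0)
    (f : Fin N → ℝ → ℝ) (hf : ∀ i, ContDiff ℝ (⊤ : ℕ∞) (f i)) (hfpos : ∀ i t, 0 < f i t) :
    (IsFlatOn U (fun u => Matrix.diagonal (fun i => (H i u ^ 2)⁻¹)) ∧
      IsFlatOn U (fun u => Matrix.diagonal (fun i => f i (u i) * (H i u ^ 2)⁻¹))) ↔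
    (∀ u ∈ U, ∀ i j k, i ≠ j → i ≠ k → j ≠ k →
        pd (fun w => (1 / H i w) * pd (H j) i w) k u =
          ((1 / H i u) * pd (H k) i u) * ((1 / H k u) * pd (H j) k u)) ∧
    (∀ u ∈ U, ∀ i j, i ≠ j →
        pd (fun w => (1 / H i w) * pd (H j) i w) i u +
          pd (fun w => (1 / H j w) * pd (H i) j w) j u +
          (∑ s ∈ Finset.univ.filter (fun s => s ≠ i ∧ s ≠ j),
            ((1 / H s u) * pd (H i) s u) * ((1 / H s u) * pd (H j) s u)) = 0) ∧
    (∀ u ∈ U, ∀ i j, i ≠ j →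
        f i (u i) * pd (fun w => (1 / H i w) * pd (H j) i w) i u +
          (1 / 2) * deriv (f i) (u i) * ((1 / H i u) * pd (H j) i u) +
          f j (u j) * pd (fun w => (1 / H j w) * pd (H i) j w) j u +
          (1 / 2) * deriv (f j) (u j) * ((1 / H j u) * pd (H i) j u) +
          (∑ s ∈ Finset.univ.filter (fun s => s ≠ i ∧ s ≠ j),
            f s (u s) * ((1 / H s u) * pd (H i) s u) * ((1 / H s u) * pd (H j) s u)) = 0) := by
  have hH' : ∀ i, ContDiffOn ℝ (⊤:ℕ∞) (H i) U := fun i => (hH i).of_le (by simp)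
  have hf' : ∀ i, ContDiff ℝ (⊤:ℕ∞) (f i) := fun i => (hf i).of_le (by simp)
  have hg2 : (fun u : Fin N → ℝ => Matrix.diagonal (fun i => f i (u i) * (H i u ^ 2)⁻¹))
      = fun v => Matrix.diagonal (fun i => (LMK2 H f i v ^ 2)⁻¹) := by
    funext v
    have he : (fun i => f i (v i) * (H i v ^ 2)⁻¹)
        = fun i => (LMK2 H f i v ^ 2)⁻¹ := by
      funext i
      rw [show LMK2 H f i v = H i v / LMsf f i v from rfl, div_pow,
        show LMsf f i v ^ 2 = f i (v i) from Real.sq_sqrt (hfpos i (v i)).le, inv_div,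
        div_eq_mul_inv]
    rw [he]
  rw [hg2, LMflat_diag_iff hUopen hH' hHne,
    LMflat_diag_iff hUopen (K2_cdOn hUopen hH' hHne hf' hfpos)
      (K2_ne hUopen hH' hHne hf' hfpos)]
  constructor
  · rintro ⟨⟨A1, A2⟩, _B1, B2⟩
    exact ⟨fun u hu i j k hij hik hjk => A1 u hu i j k hij hik hjk,
      fun u hu i j hij => A2 u hu i j hij,
      fun u hu i j hij => (LMQ2 hUopen hH' hHne hf' hfpos hu hij).mp (B2 u hu i j hij)⟩
  · rintro ⟨h1, h2, h3⟩
    exact ⟨⟨fun u hu i j k hij hik hjk => h1 u hu i j k hij hik hjk,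
        fun u hu i j hij => h2 u hu i j hij⟩,
      fun u hu i j k hij hik hjk =>
        (LMQ1 hUopen hH' hHne hf' hfpos hu hij hik hjk).mpr (h1 u hu i j k hij hik hjk),
      fun u hu i j hij => (LMQ2 hUopen hH' hHne hf' hfpos hu hij).mpr (h3 u hu i j hij)⟩
end
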